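/- arXiv:1608.08931 — 5 statements merged into one kernel-verified Lean document; each statement's English description precedes it below -/
import Mathlib

section
/- For every integer N ≥ 2 and every σ > 0, the function p_{N,σ} integrates to 1 over ℝ^N, i.e. ∫_{ℝ^N} p_{N,σ}(x) dx = 1; in other words, p_{N,σ} is a probability density on ℝ^N. -/
/-! Lagrange's identity `∑_{k<l} (x_k - x_l)² = N ∑ x_n² - (∑ x_n)²` turns the exponent of
`p_{N,σ}` into `-(∑ x_n² - (1 - σ⁻²)(∑ x_n)²/N)/2`. Completing the square, this is `-|A x|²/2` for
the rank-one perturbation `A = I + c 𝟙𝟙ᵀ` of the identity with `c = (σ⁻¹ - 1)/N`, and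
`det A = 1 + N c = σ⁻¹`. The linear change of variables `y = A x` multiplies the integral by
`|det A|⁻¹ = σ`, and the standard Gaussian integral `(2π)^{N/2}` cancels the normalisation. -/

open MeasureTheory Real Finset Filter

/-- The `N`-variate normal density
`p_{N,σ}(x) = σ⁻¹ (2π)^{-N/2} ∏_{k<l} exp(-(1/(2N))(1-σ⁻²)(x_k-x_l)²) ∏_n exp(-x_n²/(2σ²))`. -/
noncomputable def pdensity (N : ℕ) (σ : ℝ) (x : Fin N → ℝ) : ℝ :=
  σ⁻¹ * (2 * π) ^ (-(N : ℝ) / 2) *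
    (∏ k : Fin N, ∏ l ∈ Finset.univ.filter (fun l => k < l),
      Real.exp (-(1 / (2 * (N : ℝ))) * (1 - (σ ^ 2)⁻¹) * (x k - x l) ^ 2)) *
    ∏ n : Fin N, Real.exp (-(x n) ^ 2 / (2 * σ ^ 2))

section SumIdentities

variable {ι : Type*} [Fintype ι]

theorem two_nsmul_sum_sum_lt_add_sum_diag [LinearOrder ι] {M : Type*} [AddCommMonoid M]
    (f : ι → ι → M) (hf : ∀ k l, f k l = f l k) :
    2 • ∑ k, ∑ l ∈ univ.filter (k < ·), f k l + ∑ k, f k k = ∑ k, ∑ l, f k l := by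
  have hsplit : ∀ k l, f k l =
      ((if k < l then f k l else 0) + if l < k then f k l else 0) + if k = l then f k l else 0 := by
    intro k l
    rcases lt_trichotomy k l with h | rfl | h
    · simp [h, h.ne, h.not_gt]
    · simp
    · simp [h, h.ne', h.not_gt]
  have hswap : ∑ k, ∑ l, (if l < k then f k l else 0) = ∑ k, ∑ l, if k < l then f k l else 0 := by
    rw [Finset.sum_comm]
    simp_rw [hf]
  have hsum : ∑ k, ∑ l, f k l = ∑ k, ∑ l, (if k < l then f k l else 0)
      + ∑ k, ∑ l, (if l < k then f k l else 0) + ∑ k, ∑ l, (if k = l then f k l else 0) := by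
    simp only [← Finset.sum_add_distrib]
    exact Finset.sum_congr rfl fun k _ => Finset.sum_congr rfl fun l _ => hsplit k l
  rw [hsum, hswap]
  simp [Finset.sum_filter, two_nsmul]

theorem sum_sum_sub_sq {R : Type*} [CommRing R] (x : ι → R) :
    ∑ k, ∑ l, (x k - x l) ^ 2 = 2 * (Fintype.card ι * ∑ n, x n ^ 2 - (∑ n, x n) ^ 2) := by
  simp only [sub_sq, Finset.sum_add_distrib, Finset.sum_sub_distrib, Finset.sum_const,
    Finset.card_univ, nsmul_eq_mul, ← Finset.mul_sum, ← Finset.sum_mul]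
  ring

theorem sum_sum_lt_sub_sq [LinearOrder ι] (x : ι → ℝ) :
    ∑ k, ∑ l ∈ univ.filter (k < ·), (x k - x l) ^ 2
      = Fintype.card ι * ∑ n, x n ^ 2 - (∑ n, x n) ^ 2 := by
  have h := two_nsmul_sum_sum_lt_add_sum_diag (fun k l => (x k - x l) ^ 2)
    (fun k l => by ring)
  simp only [sub_self, ne_eq, OfNat.ofNat_ne_zero, not_false_eq_true, zero_pow,
    Finset.sum_const_zero, add_zero, nsmul_eq_mul, Nat.cast_ofNat, sum_sum_sub_sq] at h
  linarith

theorem sum_add_mul_sum_sq {R : Type*} [CommRing R] (x : ι → R) (c : R) :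
    ∑ n, (x n + c * ∑ m, x m) ^ 2
      = ∑ n, x n ^ 2 + c * (2 + Fintype.card ι * c) * (∑ n, x n) ^ 2 := by
  simp only [add_sq, Finset.sum_add_distrib, Finset.sum_const, Finset.card_univ, nsmul_eq_mul,
    ← Finset.sum_mul, ← Finset.mul_sum]
  ring

end SumIdentities

namespace Matrix

variable {ι : Type*} [Fintype ι] [DecidableEq ι] {R : Type*} [CommRing R]

theorem det_one_add_of_const (c : R) :
    (1 + of fun _ _ : ι => c).det = 1 + Fintype.card ι * c := by
  have h : (of fun _ _ : ι => c) =
      replicateCol Unit (fun _ => c) * replicateRow Unit (fun _ => (1 : R)) := by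
    ext; simp [replicateCol, replicateRow, mul_apply]
  rw [h, det_one_add_replicateCol_mul_replicateRow]
  simp [dotProduct, mul_comm]

theorem one_add_of_const_mulVec (c : R) (x : ι → R) :
    (1 + of fun _ _ : ι => c) *ᵥ x = fun n => x n + c * ∑ m, x m := by
  ext n
  rw [add_mulVec, one_mulVec]
  simp [mulVec, dotProduct, Finset.mul_sum]

end Matrix

theorem integral_comp_linearMap {E F : Type*} [NormedAddCommGroup E] [NormedSpace ℝ E]
    [MeasurableSpace E] [BorelSpace E] [FiniteDimensional ℝ E] [NormedAddCommGroup F]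
    [NormedSpace ℝ F] (μ : Measure E) [μ.IsAddHaarMeasure] {T : E →ₗ[ℝ] E}
    (hT : LinearMap.det T ≠ 0) (f : E → F) :
    ∫ x, f (T x) ∂μ = |(LinearMap.det T)⁻¹| • ∫ y, f y ∂μ := by
  have hemb : MeasurableEmbedding T :=
    (T.equivOfDetNeZero hT).toContinuousLinearEquiv.toHomeomorph.measurableEmbedding
  rw [← hemb.integral_map, Measure.map_linearMap_addHaar_eq_smul_addHaar μ hT,
    integral_smul_measure, ENNReal.toReal_ofReal (abs_nonneg _)]

theorem integral_exp_neg_half_sum_sq (ι : Type*) [Fintype ι] :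
    ∫ y : ι → ℝ, exp (-(1 / 2) * ∑ n, y n ^ 2) = √(2 * π) ^ Fintype.card ι := by
  simp_rw [Finset.mul_sum, Real.exp_sum]
  rw [integral_fintype_prod_volume_eq_pow (fun t : ℝ => exp (-(1 / 2) * t ^ 2)),
    integral_gaussian]
  norm_num [div_div_eq_mul_div, mul_comm]

theorem pdensity_eq_exp {N : ℕ} (hN : N ≠ 0) (σ : ℝ) (x : Fin N → ℝ) :
    pdensity N σ x = σ⁻¹ * (2 * π) ^ (-(N : ℝ) / 2) *
      exp (-(1 / 2) * (∑ n, x n ^ 2 - (1 - (σ ^ 2)⁻¹) / N * (∑ n, x n) ^ 2)) := by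
  have hN' : (N : ℝ) ≠ 0 := Nat.cast_ne_zero.mpr hN
  rw [pdensity, mul_assoc]
  congr 1
  simp_rw [← exp_sum, ← exp_add, ← Finset.mul_sum, ← Finset.sum_div, Finset.sum_neg_distrib]
  rw [sum_sum_lt_sub_sq, Fintype.card_fin]
  congr 1
  field_simp
  ring

/-- For every integer `N ≥ 2` and every `σ > 0`, the density `p_{N,σ}` integrates to `1`
over `ℝ^N`, i.e. it is a probability density. -/
theorem pdensity_integral_eq_one (N : ℕ) (hN : 2 ≤ N) (σ : ℝ) (hσ : 0 < σ) :
    ∫ x : Fin N → ℝ, pdensity N σ x = 1 := by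
  have hN0 : (N : ℝ) ≠ 0 := by positivity
  set A : Matrix (Fin N) (Fin N) ℝ := 1 + Matrix.of fun _ _ => (σ⁻¹ - 1) / N
  have hdet : LinearMap.det (Matrix.toLin' A) = σ⁻¹ := by
    rw [LinearMap.det_toLin', Matrix.det_one_add_of_const, Fintype.card_fin]
    field_simp
    ring
  have hdensity : ∀ x, pdensity N σ x = σ⁻¹ * (2 * π) ^ (-(N : ℝ) / 2) *
      exp (-(1 / 2) * ∑ n, Matrix.toLin' A x n ^ 2) := by
    intro x
    rw [pdensity_eq_exp (by omega), Matrix.toLin'_apply, Matrix.one_add_of_const_mulVec,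
      sum_add_mul_sum_sq, Fintype.card_fin]
    congr 3
    field_simp
    ring
  have h2π : 0 < 2 * π := by positivity
  calc ∫ x, pdensity N σ x
      = σ⁻¹ * (2 * π) ^ (-(N : ℝ) / 2) * ∫ x, exp (-(1 / 2) * ∑ n, Matrix.toLin' A x n ^ 2) := by
        rw [integral_congr_ae (.of_forall hdensity), integral_const_mul]
    _ = σ⁻¹ * (2 * π) ^ (-(N : ℝ) / 2) * (σ * (2 * π) ^ ((N : ℝ) / 2)) := by
        rw [integral_comp_linearMap volume (T := Matrix.toLin' A) (hdet ▸ inv_ne_zero hσ.ne')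
          (fun y => exp (-(1 / 2) * ∑ n, y n ^ 2)), integral_exp_neg_half_sum_sq, hdet, inv_inv,
          abs_of_pos hσ, smul_eq_mul, Fintype.card_fin, sqrt_eq_rpow, ← rpow_natCast,
          ← rpow_mul h2π.le, one_div_mul_eq_div]
    _ = 1 := by
        rw [neg_div, rpow_neg h2π.le]
        field_simp
end

section
/- For every integer N ≥ 2 and every σ > 0, the variance of the first coordinate under the density p_{N,σ} equals 1 + (σ^2 - 1)/N, i.e. ∫_{ℝ^N} x_1^2 p_{N,σ}(x) dx = 1 + (σ^2 - 1)/N. -/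
open MeasureTheory Real Finset Filter

lemma gauss_int2 {b : ℝ} (hb : 0 < b) :
    ∫ x : ℝ, x ^ 2 * Real.exp (-b * x ^ 2) = (2 * b)⁻¹ * Real.sqrt (π / b) := by
  have h1 : ∫ x : ℝ, x ^ 2 * Real.exp (-b * x ^ 2)
      = 2 * ∫ x in Set.Ioi (0:ℝ), x ^ 2 * Real.exp (-b * x ^ 2) := by
    rw [← integral_comp_abs (f := fun x => x ^ 2 * Real.exp (-b * x ^ 2))]
    congr 1; funext x; rw [sq_abs]
  have h2 : ∫ x in Set.Ioi (0:ℝ), x ^ 2 * Real.exp (-b * x ^ 2)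
      = b ^ (-(3:ℝ)/2) * (1/2) * Real.Gamma (3/2) := by
    have := integral_rpow_mul_exp_neg_mul_rpow (p := 2) (q := 2) (by norm_num) (by norm_num) hb
    rw [show ((2:ℝ)+1)/2 = 3/2 by norm_num, show (-((2:ℝ)+1)/2) = -(3:ℝ)/2 by norm_num] at this
    rw [← this]
    refine setIntegral_congr_fun measurableSet_Ioi (fun x hx => ?_)
    norm_num [show ((2:ℝ)) = ((2:ℕ):ℝ) from by norm_num, Real.rpow_natCast]
  have h3 : Real.Gamma (3/2) = Real.sqrt π / 2 := by
    rw [show (3:ℝ)/2 = 1/2 + 1 by norm_num, Real.Gamma_add_one (by norm_num), Real.Gamma_one_half_eq]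
    ring
  have h4 : b ^ (-(3:ℝ)/2) = (b * b ^ ((1:ℝ)/2))⁻¹ := by
    rw [show (-(3:ℝ)/2) = -(1 + 1/2) by norm_num, Real.rpow_neg hb.le, Real.rpow_add hb,
      Real.rpow_one]
  rw [h1, h2, h3, h4, Real.sqrt_div pi_pos.le]
  simp only [Real.sqrt_eq_rpow]
  have h5 : (0:ℝ) < b ^ ((1:ℝ)/2) := Real.rpow_pos_of_pos hb _
  field_simp

lemma gauss_integrable2 {b : ℝ} (hb : 0 < b) :
    Integrable (fun x : ℝ => x ^ 2 * Real.exp (-b * x ^ 2)) := by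
  have hb2 : 0 < b / 2 := by linarith
  refine Integrable.mono' ((integrable_exp_neg_mul_sq hb2).const_mul (2 / b))
    ?_ (ae_of_all _ fun x => ?_)
  · exact (continuous_pow 2).mul (by continuity) |>.aestronglyMeasurable
  · have h1 : x ^ 2 ≤ 2 / b * Real.exp (b / 2 * x ^ 2) := by
      have h0 : b / 2 * x ^ 2 ≤ Real.exp (b / 2 * x ^ 2) := by
        have := Real.add_one_le_exp (b / 2 * x ^ 2); nlinarith [sq_nonneg x]
      have h0' := mul_le_mul_of_nonneg_left h0 (by positivity : (0:ℝ) ≤ 2 / b)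
      calc x ^ 2 = 2 / b * (b / 2 * x ^ 2) := by field_simp
        _ ≤ _ := h0'
    have h2 : Real.exp (-b * x ^ 2) = Real.exp (-(b/2) * x^2) * Real.exp (-(b/2) * x^2) := by
      rw [← Real.exp_add]; ring_nf
    rw [Real.norm_eq_abs, abs_of_nonneg (by positivity)]
    calc x ^ 2 * Real.exp (-b * x ^ 2)
        ≤ (2 / b * Real.exp (b / 2 * x ^ 2)) * Real.exp (-b * x ^ 2) := by
          apply mul_le_mul_of_nonneg_right h1 (Real.exp_pos _).le
      _ = 2 / b * Real.exp (-(b/2) * x ^ 2) := by rw [mul_assoc, ← Real.exp_add]; ring_nf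

lemma int_phi {v : ℝ} (hv : 0 < v) :
    ∫ x : ℝ, Real.exp (-x ^ 2 / (2 * v)) = Real.sqrt (2 * π * v) := by
  have : (fun x : ℝ => Real.exp (-x ^ 2 / (2 * v))) = fun x => Real.exp (-(2 * v)⁻¹ * x ^ 2) := by
    funext x; congr 1; field_simp
  rw [this, integral_gaussian]
  congr 1
  field_simp

lemma int_x_phi {v : ℝ} : ∫ x : ℝ, x * Real.exp (-x ^ 2 / (2 * v)) = 0 := by
  have h := integral_neg_eq_self (fun x : ℝ => x * Real.exp (-x ^ 2 / (2 * v))) volume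
  simp only [neg_sq, neg_mul] at h ⊢
  rw [integral_neg] at h
  simp only [neg_div] at h ⊢
  linarith

lemma integrable_phi {v : ℝ} (hv : 0 < v) :
    Integrable (fun x : ℝ => Real.exp (-x ^ 2 / (2 * v))) := by
  have : (fun x : ℝ => Real.exp (-x ^ 2 / (2 * v))) = fun x => Real.exp (-(2 * v)⁻¹ * x ^ 2) := by
    funext x; congr 1; field_simp
  rw [this]; exact integrable_exp_neg_mul_sq (by positivity)

lemma integrable_x_phi {v : ℝ} (hv : 0 < v) :
    Integrable (fun x : ℝ => x * Real.exp (-x ^ 2 / (2 * v))) := by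
  have := integrable_mul_exp_neg_mul_sq (b := (2*v)⁻¹) (by positivity)
  refine this.congr ?_
  refine ae_of_all _ fun x => ?_
  congr 1; field_simp

lemma int_x2_phi {v : ℝ} (hv : 0 < v) :
    ∫ x : ℝ, x ^ 2 * Real.exp (-x ^ 2 / (2 * v)) = v * Real.sqrt (2 * π * v) := by
  have : (fun x : ℝ => x ^ 2 * Real.exp (-x ^ 2 / (2 * v)))
      = fun x => x ^ 2 * Real.exp (-(2 * v)⁻¹ * x ^ 2) := by
    funext x; congr 1; field_simp
  rw [this, gauss_int2 (by positivity)]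
  congr 1
  · field_simp
  · congr 1; field_simp

lemma integrable_x2_phi {v : ℝ} (hv : 0 < v) :
    Integrable (fun x : ℝ => x ^ 2 * Real.exp (-x ^ 2 / (2 * v))) := by
  have : (fun x : ℝ => x ^ 2 * Real.exp (-x ^ 2 / (2 * v)))
      = fun x => x ^ 2 * Real.exp (-(2 * v)⁻¹ * x ^ 2) := by
    funext x; congr 1; field_simp
  rw [this]; exact gauss_integrable2 (by positivity)

lemma sum_pairs {N : ℕ} (x : Fin N → ℝ) :
    ∑ k : Fin N, ∑ l ∈ Finset.univ.filter (fun l => k < l), (x k - x l) ^ 2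
      = N * (∑ n, (x n) ^ 2) - (∑ n, x n) ^ 2 := by
  have hfull : (∑ k : Fin N, ∑ l : Fin N, (x k - x l) ^ 2)
      = 2 * ((N : ℝ) * (∑ n, (x n) ^ 2) - (∑ n, x n) ^ 2) := by
    have : ∀ k l : Fin N, (x k - x l) ^ 2 = x k ^ 2 - 2 * (x k * x l) + x l ^ 2 := by
      intro k l; ring
    simp_rw [this, Finset.sum_add_distrib, Finset.sum_sub_distrib, Finset.sum_const,
      ← Finset.mul_sum, ← Finset.sum_mul, Finset.card_univ, Fintype.card_fin, nsmul_eq_mul]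
    rw [← Finset.mul_sum]
    ring
  have hsplit : ∀ k : Fin N, (∑ l : Fin N, (x k - x l) ^ 2)
      = (∑ l ∈ Finset.univ.filter (fun l => k < l), (x k - x l) ^ 2)
        + ∑ l ∈ Finset.univ.filter (fun l => l < k), (x k - x l) ^ 2 := by
    intro k
    rw [← Finset.sum_filter_add_sum_filter_not Finset.univ (fun l => k < l)]
    congr 1
    have : Finset.univ.filter (fun l => ¬ k < l) = insert k (Finset.univ.filter (fun l => l < k)) := by
      ext l
      simp only [Finset.mem_filter, Finset.mem_univ, true_and, Finset.mem_insert, not_lt]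
      constructor
      · intro h
        rcases lt_or_eq_of_le h with h' | h'
        · exact Or.inr h'
        · exact Or.inl h'
      · rintro (rfl | h)
        · exact le_refl _
        · exact h.le
    rw [this, Finset.sum_insert (by simp)]
    simp
  have hswap : (∑ k : Fin N, ∑ l ∈ Finset.univ.filter (fun l => l < k), (x k - x l) ^ 2)
      = ∑ k : Fin N, ∑ l ∈ Finset.univ.filter (fun l => k < l), (x k - x l) ^ 2 := by
    rw [Finset.sum_comm' (t' := Finset.univ) (s' := fun l => Finset.univ.filter (fun k => l < k))]
    · apply Finset.sum_congr rfl
      intro l _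
      apply Finset.sum_congr rfl
      intro k hk
      ring
    · intro k l
      simp
  have := hfull
  simp_rw [hsplit, Finset.sum_add_distrib, hswap] at this
  linarith

/-- The variance of the first coordinate under `p_{N,σ}` equals `1 + (σ²-1)/N`. -/
theorem pdensity_variance_first (N : ℕ) (hN : 2 ≤ N) (σ : ℝ) (hσ : 0 < σ) :
    ∫ x : Fin N → ℝ, (x ⟨0, by omega⟩) ^ 2 * pdensity N σ x = 1 + (σ ^ 2 - 1) / (N : ℝ) := by
  classical
  have hσ2 : (0:ℝ) < σ ^ 2 := by positivity
  have hNR : (0:ℝ) < (N:ℝ) := by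
    have : 0 < N := by omega
    exact_mod_cast this
  set i0 : Fin N := ⟨0, by omega⟩ with hi0def
  -- Step 1: exponential form of the density
  have hpd : ∀ x : Fin N → ℝ, pdensity N σ x
      = σ⁻¹ * (2 * π) ^ (-(N : ℝ) / 2)
        * Real.exp (-(1/2) * (∑ n, (x n) ^ 2)
            + ((1 - (σ ^ 2)⁻¹) / (2 * (N:ℝ))) * (∑ n, x n) ^ 2) := by
    intro x
    unfold pdensity
    simp_rw [← Real.exp_sum]
    rw [mul_assoc, ← Real.exp_add]
    congr 1
    simp_rw [← Finset.mul_sum]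
    rw [sum_pairs]
    have hsum : ∑ n : Fin N, -(x n) ^ 2 / (2 * σ ^ 2) = -(∑ n, (x n) ^ 2) / (2 * σ ^ 2) := by
      rw [← Finset.sum_div, ← Finset.sum_neg_distrib]
    rw [hsum]
    field_simp
    ring
  -- Step 2: geometry
  set u : EuclideanSpace ℝ (Fin N) := WithLp.toLp 2 (fun _ => (Real.sqrt N)⁻¹) with hu
  set v : EuclideanSpace ℝ (Fin N) := EuclideanSpace.single i0 1 with hv
  have hsq : (0:ℝ) < Real.sqrt N := Real.sqrt_pos.2 hNR
  have hnu : ‖u‖ = 1 := by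
    rw [EuclideanSpace.norm_eq]
    simp only [hu]
    rw [Finset.sum_const, Finset.card_univ, Fintype.card_fin, nsmul_eq_mul]
    rw [Real.norm_eq_abs, abs_of_nonneg (by positivity), ← Real.sqrt_inv]
    rw [Real.sq_sqrt (by positivity), mul_inv_cancel₀ hNR.ne', Real.sqrt_one]
  have hnv : ‖v‖ = 1 := by simp [hv, EuclideanSpace.norm_single]
  set e : EuclideanSpace ℝ (Fin N) ≃ₗᵢ[ℝ] EuclideanSpace ℝ (Fin N) :=
    Submodule.reflection (ℝ ∙ (v - u))ᗮ with he
  have hev : e v = u := Submodule.reflection_sub (by rw [hnv, hnu])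
  have heu : e u = v := by rw [← hev, he, Submodule.reflection_reflection]
  have fact1 : ∀ y : EuclideanSpace ℝ (Fin N), ∑ i, (e y i) ^ 2 = ∑ i, (y i) ^ 2 := by
    intro y
    have h := e.inner_map_map y y
    simp only [PiLp.inner_apply, RCLike.inner_apply, conj_trivial] at h
    simpa only [← pow_two] using h
  have fact2 : ∀ y : EuclideanSpace ℝ (Fin N), e y i0 = (Real.sqrt N)⁻¹ * ∑ i, y i := by
    intro y
    have h1 : (inner ℝ (e y) v : ℝ) = e y i0 := by
      simp [hv, EuclideanSpace.inner_single_right]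
    have h2 : (inner ℝ (e y) v : ℝ) = inner ℝ y u := by
      rw [← heu]; exact e.inner_map_map y u
    have h3 : (inner ℝ y u : ℝ) = (Real.sqrt N)⁻¹ * ∑ i, y i := by
      simp only [PiLp.inner_apply, RCLike.inner_apply, conj_trivial, hu]
      rw [← Finset.mul_sum]
    rw [← h1, h2, h3]
  have fact3 : ∀ y : EuclideanSpace ℝ (Fin N), ∑ i, e y i = Real.sqrt N * y i0 := by
    intro y
    have h1 : (inner ℝ (e y) u : ℝ) = (Real.sqrt N)⁻¹ * ∑ i, e y i := by
      simp only [PiLp.inner_apply, RCLike.inner_apply, conj_trivial, hu]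
      rw [← Finset.mul_sum]
    have h2 : (inner ℝ (e y) u : ℝ) = y i0 := by
      rw [← hev, e.inner_map_map, hv]
      simp [EuclideanSpace.inner_single_right]
    have := h1.symm.trans h2
    field_simp at this
    linarith [this]
  -- measure preserving conjugated map
  set φ := (MeasurableEquiv.toLp 2 (Fin N → ℝ)).symm with hφ
  set T : (Fin N → ℝ) ≃ᵐ (Fin N → ℝ) :=
    (φ.symm.trans e.toHomeomorph.toMeasurableEquiv).trans φ with hT
  have hTmp : MeasurePreserving T volume volume := by
    have h1 := (EuclideanSpace.volume_preserving_symm_measurableEquiv_toLp (Fin N))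
    have h2 := e.measurePreserving
    exact h1.comp ((h2.comp h1.symm))
  have hcov : ∀ F : (Fin N → ℝ) → ℝ, ∫ x, F x = ∫ y, F (T y) := by
    intro F
    exact (hTmp.integral_comp T.measurableEmbedding F).symm
  have hTy : ∀ (y : Fin N → ℝ), T y = fun i => e (WithLp.toLp 2 y) i := fun y => rfl
  -- Step 3: the product density
  set Var : Fin N → ℝ := fun n => if n = i0 then σ ^ 2 else 1 with hVar
  have hVpos : ∀ n, 0 < Var n := by
    intro n; by_cases h : n = i0 <;> simp [hVar, h] <;> positivity
  set g : Fin N → ℝ → ℝ :=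
    fun n t => (Real.sqrt (2 * π * Var n))⁻¹ * Real.exp (-t ^ 2 / (2 * Var n)) with hg
  have hCpos : ∀ n, (0:ℝ) < Real.sqrt (2 * π * Var n) := by
    intro n
    have := hVpos n
    positivity
  have int_g : ∀ n, ∫ t : ℝ, g n t = 1 := by
    intro n
    simp only [hg]
    rw [MeasureTheory.integral_const_mul, int_phi (hVpos n),
      inv_mul_cancel₀ (hCpos n).ne']
  have int_tg : ∀ n, ∫ t : ℝ, t * g n t = 0 := by
    intro n
    simp only [hg]
    have : (fun t : ℝ => t * ((Real.sqrt (2 * π * Var n))⁻¹ * Real.exp (-t ^ 2 / (2 * Var n))))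
        = fun t => (Real.sqrt (2 * π * Var n))⁻¹ * (t * Real.exp (-t ^ 2 / (2 * Var n))) := by
      funext t; ring
    rw [this, MeasureTheory.integral_const_mul, int_x_phi, mul_zero]
  have int_t2g : ∀ n, ∫ t : ℝ, t * (t * g n t) = Var n := by
    intro n
    simp only [hg]
    have : (fun t : ℝ => t * (t * ((Real.sqrt (2 * π * Var n))⁻¹ * Real.exp (-t ^ 2 / (2 * Var n)))))
        = fun t => (Real.sqrt (2 * π * Var n))⁻¹ * (t ^ 2 * Real.exp (-t ^ 2 / (2 * Var n))) := by
      funext t; ring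
    rw [this, MeasureTheory.integral_const_mul, int_x2_phi (hVpos n)]
    rw [← mul_assoc, mul_comm _ (Var n), mul_assoc, inv_mul_cancel₀ (hCpos n).ne', mul_one]
  have intg : ∀ n, Integrable (g n) := by
    intro n
    simp only [hg]
    exact (integrable_phi (hVpos n)).const_mul _
  have inttg : ∀ n, Integrable (fun t : ℝ => t * g n t) := by
    intro n
    refine ((integrable_x_phi (hVpos n)).const_mul ((Real.sqrt (2 * π * Var n))⁻¹)).congr
      (ae_of_all _ fun t => ?_)
    simp only [hg]; ring
  have intt2g : ∀ n, Integrable (fun t : ℝ => t * (t * g n t)) := by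
    intro n
    refine ((integrable_x2_phi (hVpos n)).const_mul ((Real.sqrt (2 * π * Var n))⁻¹)).congr
      (ae_of_all _ fun t => ?_)
    simp only [hg]; ring
  have hgp : ∀ y : Fin N → ℝ,
      σ⁻¹ * (2 * π) ^ (-(N : ℝ) / 2)
        * Real.exp (-(1/2) * (∑ n, (y n) ^ 2)
            + ((1 - (σ ^ 2)⁻¹) / (2 * (N:ℝ))) * (Real.sqrt N * y i0) ^ 2)
      = ∏ n, g n (y n) := by
    intro y
    simp only [hg]
    rw [Finset.prod_mul_distrib, ← Real.exp_sum]
    have hconst : (∏ n : Fin N, (Real.sqrt (2 * π * Var n))⁻¹)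
        = (2 * π) ^ (-(N : ℝ) / 2) * σ⁻¹ := by
      have h1 : ∀ n : Fin N, (Real.sqrt (2 * π * Var n))⁻¹
          = (2 * π) ^ (-(1:ℝ)/2) * (if n = i0 then σ⁻¹ else 1) := by
        intro n
        by_cases h : n = i0
        · simp only [hVar, h, if_true]
          rw [Real.sqrt_mul (by positivity) (σ^2), Real.sqrt_sq hσ.le, mul_inv,
            Real.sqrt_eq_rpow, ← Real.rpow_neg (by positivity)]
          norm_num
        · simp only [hVar, h, if_false, mul_one]
          rw [Real.sqrt_eq_rpow, ← Real.rpow_neg (by positivity)]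
          norm_num
      simp_rw [h1]
      rw [Finset.prod_mul_distrib, Finset.prod_const,
        Finset.prod_ite_eq' Finset.univ i0 (fun _ => σ⁻¹)]
      simp only [Finset.mem_univ, if_true, Finset.card_univ, Fintype.card_fin]
      congr 1
      rw [← Real.rpow_natCast ((2*π) ^ (-(1:ℝ)/2)) N, ← Real.rpow_mul (by positivity)]
      congr 1
      ring
    have hexp : (∑ n : Fin N, -(y n) ^ 2 / (2 * Var n))
        = -(1/2) * (∑ n, (y n) ^ 2)
          + ((1 - (σ ^ 2)⁻¹) / (2 * (N:ℝ))) * (Real.sqrt N * y i0) ^ 2 := by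
      have h1 : ∀ n : Fin N, -(y n) ^ 2 / (2 * Var n)
          = -(1/2) * (y n) ^ 2 + (if n = i0 then ((1 - (σ ^ 2)⁻¹) / 2) * (y n) ^ 2 else 0) := by
        intro n
        by_cases h : n = i0
        · simp only [hVar, h, if_true]
          field_simp
          ring
        · simp only [hVar, h, if_false]
          ring
      simp_rw [h1]
      rw [Finset.sum_add_distrib, ← Finset.mul_sum,
        Finset.sum_ite_eq' Finset.univ i0 (fun n => ((1 - (σ ^ 2)⁻¹) / 2) * (y n) ^ 2)]
      simp only [Finset.mem_univ, if_true]
      rw [mul_pow, Real.sq_sqrt hNR.le]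
      field_simp
    rw [hconst, hexp]
    ring
  -- Step 4: pointwise identity after the change of variables
  have hpoint : ∀ y : Fin N → ℝ,
      (T y i0) ^ 2 * pdensity N σ (T y)
      = ∑ j : Fin N, ∑ k : Fin N, (N:ℝ)⁻¹ *
          ∏ n, ((if n = j then y n else 1) * ((if n = k then y n else 1) * g n (y n))) := by
    intro y
    have e1 : T y i0 = (Real.sqrt N)⁻¹ * ∑ i, y i := fact2 (WithLp.toLp 2 y)
    have e2 : ∑ n, (T y n) ^ 2 = ∑ n, (y n) ^ 2 := fact1 (WithLp.toLp 2 y)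
    have e3 : ∑ n, T y n = Real.sqrt N * y i0 := fact3 (WithLp.toLp 2 y)
    rw [hpd (T y), e1, e2, e3, hgp y]
    have hprod : ∀ j k : Fin N,
        (∏ n, ((if n = j then y n else 1) * ((if n = k then y n else 1) * g n (y n))))
        = y j * (y k * ∏ n, g n (y n)) := by
      intro j k
      rw [Finset.prod_mul_distrib, Finset.prod_mul_distrib,
        Finset.prod_ite_eq' Finset.univ j (fun n => y n),
        Finset.prod_ite_eq' Finset.univ k (fun n => y n)]
      simp only [Finset.mem_univ, if_true]
      try ring
    simp_rw [hprod]
    have hs : (N:ℝ)⁻¹ * ((∑ j, y j) * ((∑ k, y k) * (∏ n, g n (y n))))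
        = ∑ j : Fin N, ∑ k : Fin N, (N:ℝ)⁻¹ * (y j * (y k * (∏ n, g n (y n)))) := by
      rw [Finset.sum_mul, Finset.mul_sum]
      apply Finset.sum_congr rfl
      intro j _
      rw [Finset.sum_mul, Finset.mul_sum, Finset.mul_sum]
    rw [← hs]
    have hinv : ((Real.sqrt N)⁻¹) ^ 2 = (N:ℝ)⁻¹ := by
      rw [inv_pow, Real.sq_sqrt hNR.le]
    rw [mul_pow, hinv]
    ring
  -- Step 5: integrability of each factor
  have hintfac : ∀ j k n : Fin N, Integrable (fun t : ℝ =>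
      (if n = j then t else 1) * ((if n = k then t else 1) * g n t)) := by
    intro j k n
    by_cases hj : n = j
    · subst hj
      by_cases hk : n = k
      · subst hk
        refine (intt2g n).congr (ae_of_all _ fun t => ?_)
        simp
      · refine (inttg n).congr (ae_of_all _ fun t => ?_)
        simp [hk]
    · by_cases hk : n = k
      · subst hk
        refine (inttg n).congr (ae_of_all _ fun t => ?_)
        simp [hj]
      · refine (intg n).congr (ae_of_all _ fun t => ?_)
        simp [hj, hk]
  have hval : ∀ j k n : Fin N,
      (∫ t : ℝ, (if n = j then t else 1) * ((if n = k then t else 1) * g n t))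
      = if n = j then (if n = k then Var n else 0) else if n = k then 0 else 1 := by
    intro j k n
    by_cases hj : n = j
    · subst hj
      by_cases hk : n = k
      · subst hk
        simp only [if_pos rfl, one_mul]
        exact int_t2g n
      · simp only [if_pos rfl, if_neg hk, one_mul]
        exact int_tg n
    · by_cases hk : n = k
      · subst hk
        simp only [if_pos rfl, if_neg hj, one_mul]
        exact int_tg n
      · simp only [if_neg hj, if_neg hk, one_mul]
        exact int_g n
  -- Step 6: compute the integral
  have hstep1 : ∫ x : Fin N → ℝ, (x i0) ^ 2 * pdensity N σ x
      = ∫ y : Fin N → ℝ, T y i0 ^ 2 * pdensity N σ (T y) :=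
    (hTmp.integral_comp T.measurableEmbedding
      (fun x : Fin N → ℝ => (x i0) ^ 2 * pdensity N σ x)).symm
  rw [hstep1, integral_congr_ae (ae_of_all _ hpoint)]
  have hintprod : ∀ j k : Fin N, Integrable (fun y : Fin N → ℝ =>
      ∏ n, ((if n = j then y n else 1) * ((if n = k then y n else 1) * g n (y n)))) :=
    fun j k => Integrable.fintype_prod (fun n => hintfac j k n)
  rw [integral_finset_sum _ (fun j _ =>
    integrable_finset_sum _ (fun k _ => (hintprod j k).const_mul _))]
  have hinner : ∀ j : Fin N,
      (∫ y : Fin N → ℝ, ∑ k : Fin N, (N:ℝ)⁻¹ *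
        ∏ n, ((if n = j then y n else 1) * ((if n = k then y n else 1) * g n (y n))))
      = ∑ k : Fin N, (N:ℝ)⁻¹ * (if j = k then Var j else 0) := by
    intro j
    rw [integral_finset_sum _ (fun k _ => (hintprod j k).const_mul _)]
    apply Finset.sum_congr rfl
    intro k _
    rw [MeasureTheory.integral_const_mul,
      MeasureTheory.integral_fintype_prod_volume_eq_prod
        (fun n t => (if n = j then t else 1) * ((if n = k then t else 1) * g n t))]
    congr 1
    simp_rw [hval]
    by_cases hjk : j = k
    · subst hjk
      rw [if_pos rfl]
      have h1 : ∀ n : Fin N,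
          (if n = j then (if n = j then Var n else 0) else if n = j then 0 else 1)
          = if n = j then Var n else 1 := by
        intro n; by_cases h : n = j <;> simp [h]
      simp_rw [h1]
      rw [Finset.prod_ite_eq' Finset.univ j Var]
      simp
    · rw [if_neg hjk]
      apply Finset.prod_eq_zero (Finset.mem_univ j)
      simp [hjk, Ne.symm hjk]
  simp_rw [hinner]
  have hcol : ∀ j : Fin N, ∑ k : Fin N, (N:ℝ)⁻¹ * (if j = k then Var j else 0)
      = (N:ℝ)⁻¹ * Var j := by
    intro j
    rw [← Finset.mul_sum, Finset.sum_ite_eq Finset.univ j (fun _ => Var j)]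
    simp
  simp_rw [hcol]
  rw [← Finset.mul_sum]
  have hVsum : ∑ j, Var j = σ ^ 2 + ((N:ℝ) - 1) := by
    have h1 : ∀ j : Fin N, Var j = 1 + (if j = i0 then σ ^ 2 - 1 else 0) := by
      intro j
      by_cases h : j = i0
      · simp only [hVar, h, if_true]; ring
      · simp only [hVar, h, if_false]; ring
    simp_rw [h1]
    rw [Finset.sum_add_distrib, Finset.sum_const,
      Finset.sum_ite_eq' Finset.univ i0 (fun _ => σ ^ 2 - 1)]
    simp only [Finset.mem_univ, if_true, Finset.card_univ, Fintype.card_fin, nsmul_eq_mul, mul_one]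
    ring
  rw [hVsum]
  field_simp
  ring
end

section
/- For every integer N ≥ 2, every σ > 0, and every t ∈ ℝ^N, the moment-generating function of the density p_{N,σ} is given by ∫_{ℝ^N} exp(∑_{n=1}^N t_n x_n) p_{N,σ}(x) dx = exp( (1/2) [ ∑_{k=1}^N t_k^2 - (1 - σ^2) ( N^{-1/2} ∑_{k=1}^N t_k )^2 ] ). -/
open MeasureTheory Real Finset Filter

lemma gauss_mgf (a s : ℝ) (ha : 0 < a) :
    ∫ x : ℝ, Real.exp (-a * x ^ 2 + s * x) = Real.sqrt (π / a) * Real.exp (s ^ 2 / (4 * a)) := by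
  have h : ∀ x : ℝ, Real.exp (-a * x ^ 2 + s * x)
      = Real.exp (-a * (x + -(s / (2 * a))) ^ 2) * Real.exp (s ^ 2 / (4 * a)) := by
    intro x
    rw [← Real.exp_add]
    congr 1
    field_simp
    ring
  simp_rw [h]
  rw [integral_mul_const, integral_add_right_eq_self (fun x => Real.exp (-a * x ^ 2)),
    integral_gaussian]

lemma two_mul_sum_lt (N : ℕ) (g : Fin N → Fin N → ℝ) (hsymm : ∀ k l, g l k = g k l)
    (hdiag : ∀ k, g k k = 0) :
    2 * ∑ k : Fin N, ∑ l ∈ Finset.univ.filter (fun l => k < l), g k l = ∑ k, ∑ l, g k l := by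
  have key : ∀ k l : Fin N,
      (if k < l then g k l else 0) + (if l < k then g k l else 0) = g k l := by
    intro k l
    rcases lt_trichotomy k l with h | h | h
    · simp [h, asymm h]
    · simp [h, hdiag, lt_irrefl]
    · simp [h, asymm h]
  simp_rw [Finset.sum_filter]
  have swap : ∑ k : Fin N, ∑ l : Fin N, (if k < l then g k l else 0)
      = ∑ k : Fin N, ∑ l : Fin N, (if l < k then g k l else 0) := by
    rw [Finset.sum_comm]
    simp_rw [hsymm]
  rw [two_mul]
  nth_rewrite 2 [swap]
  rw [← Finset.sum_add_distrib]
  simp_rw [← Finset.sum_add_distrib, key]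

lemma sum_sq_pairs (N : ℕ) (x : Fin N → ℝ) :
    2 * ∑ k : Fin N, ∑ l ∈ Finset.univ.filter (fun l => k < l), (x k - x l) ^ 2
      = 2 * (N : ℝ) * ∑ n, x n ^ 2 - 2 * (∑ n, x n) ^ 2 := by
  rw [two_mul_sum_lt N (fun k l => (x k - x l) ^ 2) (fun k l => by ring) (fun k => by ring)]
  have h : ∀ k : Fin N, ∑ l, (x k - x l) ^ 2
      = (N : ℝ) * x k ^ 2 - 2 * x k * (∑ l, x l) + ∑ l, x l ^ 2 := by
    intro k
    simp_rw [sub_sq]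
    rw [Finset.sum_add_distrib, Finset.sum_sub_distrib, Finset.sum_const, ← Finset.mul_sum,
      Finset.card_univ, Fintype.card_fin]
    ring_nf
  simp_rw [h]
  rw [Finset.sum_add_distrib, Finset.sum_sub_distrib, ← Finset.mul_sum, Finset.sum_const,
    Finset.card_univ, Fintype.card_fin, ← Finset.sum_mul, nsmul_eq_mul, ← Finset.mul_sum]
  ring

lemma pdensity_eq (N : ℕ) (hN : 2 ≤ N) (σ : ℝ) (hσ : 0 < σ) (x : Fin N → ℝ) :
    pdensity N σ x = σ⁻¹ * (2 * π) ^ (-(N : ℝ) / 2) *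
      Real.exp (-(1 / 2) * ∑ n, x n ^ 2 + ((1 - (σ ^ 2)⁻¹) / (2 * N)) * (∑ n, x n) ^ 2) := by
  have hN0 : (N : ℝ) ≠ 0 := by positivity
  have hσ0 : σ ≠ 0 := ne_of_gt hσ
  unfold pdensity
  rw [mul_assoc]
  congr 1
  simp_rw [← Real.exp_sum, ← Real.exp_add]
  congr 1
  have hP := sum_sq_pairs N x
  set P := ∑ k : Fin N, ∑ l ∈ Finset.univ.filter (fun l => k < l), (x k - x l) ^ 2 with hPdef
  have h1 : ∑ k : Fin N, ∑ l ∈ Finset.univ.filter (fun l => k < l),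
      -(1 / (2 * (N : ℝ))) * (1 - (σ ^ 2)⁻¹) * (x k - x l) ^ 2
      = -(1 / (2 * (N : ℝ))) * (1 - (σ ^ 2)⁻¹) * P := by
    rw [hPdef, Finset.mul_sum]
    congr 1
    ext k
    rw [Finset.mul_sum]
  have h2 : ∑ n : Fin N, -(x n) ^ 2 / (2 * σ ^ 2) = -(1 / (2 * σ ^ 2)) * ∑ n, x n ^ 2 := by
    rw [Finset.mul_sum]
    congr 1
    ext n
    ring
  rw [h1, h2]
  have hPval : P = (N : ℝ) * ∑ n, x n ^ 2 - (∑ n, x n) ^ 2 := by linarith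
  rw [hPval]
  field_simp
  ring

lemma sumsq_eq_normsq {N : ℕ} (y : EuclideanSpace ℝ (Fin N)) : ∑ i, y i ^ 2 = ‖y‖ ^ 2 := by
  rw [EuclideanSpace.norm_eq, Real.sq_sqrt (by positivity)]
  simp [sq_abs]

/-- Moment-generating function of `p_{N,σ}`:
`∫ exp(∑ tₙ xₙ) p_{N,σ}(x) dx = exp((1/2)[∑ tₖ² - (1-σ²)(N^{-1/2} ∑ tₖ)²])`. -/
theorem pdensity_mgf (N : ℕ) (hN : 2 ≤ N) (σ : ℝ) (hσ : 0 < σ) (t : Fin N → ℝ) :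
    ∫ x : Fin N → ℝ, Real.exp (∑ n, t n * x n) * pdensity N σ x =
      Real.exp ((1 / 2) *
        (∑ k, (t k) ^ 2 - (1 - σ ^ 2) * ((Real.sqrt (N : ℝ))⁻¹ * ∑ k, t k) ^ 2)) := by
  classical
  have hNpos : (0:ℝ) < N := by positivity
  have hσ0 : σ ≠ 0 := ne_of_gt hσ
  have hsN : (0:ℝ) < Real.sqrt N := Real.sqrt_pos.mpr hNpos
  set i₀ : Fin N := ⟨0, by omega⟩ with hi₀
  set u : EuclideanSpace ℝ (Fin N) := WithLp.toLp 2 (fun _ => (Real.sqrt N)⁻¹) with hu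
  have hsum_u : ∀ y : EuclideanSpace ℝ (Fin N),
      (inner ℝ u y : ℝ) = (Real.sqrt N)⁻¹ * ∑ n, y n := by
    intro y
    simp [PiLp.inner_apply, RCLike.inner_apply, hu, Finset.mul_sum]
    exact Finset.sum_congr rfl fun _ _ => mul_comm _ _
  have hnormu : ‖u‖ = 1 := by
    have : ∑ i, u i ^ 2 = 1 := by
      simp only [hu, PiLp.toLp_apply, Finset.sum_const, Finset.card_univ, Fintype.card_fin, nsmul_eq_mul]
      rw [← Real.sqrt_inv, Real.sq_sqrt (by positivity)]
      field_simp
    have h2 := sumsq_eq_normsq u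
    nlinarith [norm_nonneg u]
  have horth : Orthonormal ℝ (Set.restrict {i₀} (fun _ : Fin N => u)) := by
    rw [orthonormal_iff_ite]
    intro i j
    have hij : i = j := Subtype.ext (by
      have h1 := i.2; have h2 := j.2
      simp only [Set.mem_singleton_iff] at h1 h2
      rw [h1, h2])
    subst hij
    rw [if_pos rfl]
    show (inner ℝ u u : ℝ) = 1
    rw [real_inner_self_eq_norm_mul_norm, hnormu]
    norm_num
  obtain ⟨b, hb⟩ := horth.exists_orthonormalBasis_extension_of_card_eq
    (by simp [finrank_euclideanSpace])
  have hbi₀ : b i₀ = u := hb i₀ rfl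
  set τ : EuclideanSpace ℝ (Fin N) := (WithLp.equiv 2 (Fin N → ℝ)).symm t with hτ
  have hτap : ∀ n, τ n = t n := fun n => rfl
  set s : Fin N → ℝ := fun k => b.repr τ k with hs
  set a : Fin N → ℝ := fun k => if k = i₀ then 1 / (2 * σ ^ 2) else 1 / 2 with ha
  have hak : ∀ k, 0 < a k := by
    intro k
    simp only [ha]
    split <;> positivity
  set C : ℝ := σ⁻¹ * (2 * π) ^ (-(N : ℝ) / 2) with hC
  -- facts about s
  have fact5 : s i₀ = (Real.sqrt N)⁻¹ * ∑ n, t n := by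
    rw [hs]
    simp only []
    rw [b.repr_apply_apply, hbi₀, hsum_u]
    simp [hτap]
  have fact4 : ∑ k, s k ^ 2 = ∑ k, t k ^ 2 := by
    have h1 : ∑ k, s k ^ 2 = ‖b.repr τ‖ ^ 2 := sumsq_eq_normsq _
    have h2 : ∑ k, τ k ^ 2 = ‖τ‖ ^ 2 := sumsq_eq_normsq _
    rw [h1, b.repr.norm_map]
    rw [← h2]
    simp [hτap]
  -- key pointwise identity
  have key : ∀ z : EuclideanSpace ℝ (Fin N),
      Real.exp (∑ n, t n * b.repr.symm z n) * pdensity N σ (fun n => b.repr.symm z n)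
        = C * ∏ k, Real.exp (-(a k) * z k ^ 2 + s k * z k) := by
    intro z
    set x : EuclideanSpace ℝ (Fin N) := b.repr.symm z with hx
    have hreprx : b.repr x = z := b.repr.apply_symm_apply z
    have fx1 : ∑ n, x n ^ 2 = ∑ k, z k ^ 2 := by
      rw [sumsq_eq_normsq, sumsq_eq_normsq, hx, b.repr.symm.norm_map]
    have fx2 : ∑ n, x n = Real.sqrt N * z i₀ := by
      have h1 : z i₀ = (Real.sqrt N)⁻¹ * ∑ n, x n := by
        rw [← hreprx, b.repr_apply_apply, hbi₀, hsum_u]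
      rw [h1]
      field_simp
    have fx3 : ∑ n, t n * x n = ∑ k, s k * z k := by
      have h1 : (inner ℝ τ x : ℝ) = ∑ n, t n * x n := by
        simp [PiLp.inner_apply, RCLike.inner_apply, hτap, mul_comm]
      have h2 : (inner ℝ (b.repr τ) (b.repr x) : ℝ) = inner ℝ τ x :=
        b.repr.inner_map_map τ x
      have h3 : (inner ℝ (b.repr τ) (b.repr x) : ℝ) = ∑ k, s k * z k := by
        rw [hreprx]
        simp [PiLp.inner_apply, RCLike.inner_apply, hs, mul_comm]
      rw [← h1, ← h2, h3]
    rw [pdensity_eq N hN σ hσ, ← Real.exp_sum, ← mul_assoc, mul_comm (Real.exp _) C,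
      mul_assoc, ← Real.exp_add]
    congr 1
    have hsum_a : ∑ k, -(a k) * z k ^ 2
        = -(1/2) * ∑ k, z k ^ 2 - (1 / (2 * σ ^ 2) - 1 / 2) * z i₀ ^ 2 := by
      have hpt : ∀ k, -(a k) * z k ^ 2
          = -(1/2) * z k ^ 2 - (if k = i₀ then (1 / (2 * σ ^ 2) - 1 / 2) * z i₀ ^ 2 else 0) := by
        intro k
        simp only [ha]
        split
        · rename_i h; rw [h]; ring
        · ring
      rw [Finset.sum_congr rfl (fun k _ => hpt k), Finset.sum_sub_distrib,
        Finset.sum_ite_eq' Finset.univ i₀, Finset.mul_sum]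
      simp
    have hNsq : Real.sqrt N ^ 2 = (N : ℝ) := Real.sq_sqrt hNpos.le
    have hexpand : ((1 - (σ ^ 2)⁻¹) / (2 * N)) * (Real.sqrt N * z i₀) ^ 2
        = -(1 / (2 * σ ^ 2) - 1 / 2) * z i₀ ^ 2 := by
      rw [mul_pow, hNsq]
      field_simp
      ring
    rw [fx1, fx2, fx3, Finset.sum_add_distrib, hsum_a, hexpand]
    congr 1
    ring
  -- change of variables
  have e1 : (∫ y : EuclideanSpace ℝ (Fin N),
        Real.exp (∑ n, t n * y n) * pdensity N σ (fun n => y n))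
      = ∫ x : Fin N → ℝ, Real.exp (∑ n, t n * x n) * pdensity N σ x :=
    (EuclideanSpace.volume_preserving_symm_measurableEquiv_toLp (Fin N)).integral_comp'
      (fun x : Fin N → ℝ => Real.exp (∑ n, t n * x n) * pdensity N σ x)
  have e2 : (∫ z : EuclideanSpace ℝ (Fin N),
        Real.exp (∑ n, t n * b.repr.symm z n) * pdensity N σ (fun n => b.repr.symm z n))
      = ∫ y : EuclideanSpace ℝ (Fin N),
          Real.exp (∑ n, t n * y n) * pdensity N σ (fun n => y n) :=
    MeasureTheory.integral_comp b.repr.symm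
      (fun y : EuclideanSpace ℝ (Fin N) =>
        Real.exp (∑ n, t n * y n) * pdensity N σ (fun n => y n))
  have step1 : ∫ x : Fin N → ℝ, Real.exp (∑ n, t n * x n) * pdensity N σ x
      = ∫ z : EuclideanSpace ℝ (Fin N), C * ∏ k, Real.exp (-(a k) * z k ^ 2 + s k * z k) := by
    rw [← e1, ← e2]
    exact integral_congr_ae (Filter.Eventually.of_forall (fun z => key z))
  have step2 : ∫ z : EuclideanSpace ℝ (Fin N), C * ∏ k, Real.exp (-(a k) * z k ^ 2 + s k * z k)
      = ∫ w : Fin N → ℝ, C * ∏ k, Real.exp (-(a k) * (w k) ^ 2 + s k * w k) :=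
    (((EuclideanSpace.volume_preserving_symm_measurableEquiv_toLp (Fin N)).symm
        _).integral_comp'
      (fun z : EuclideanSpace ℝ (Fin N) =>
        C * ∏ k, Real.exp (-(a k) * z k ^ 2 + s k * z k))).symm
  rw [step1, step2, MeasureTheory.integral_const_mul,
    MeasureTheory.integral_fintype_prod_volume_eq_prod (ι := Fin N)
      (fun k (x : ℝ) => Real.exp (-(a k) * x ^ 2 + s k * x))]
  rw [Finset.prod_congr rfl (fun k _ => gauss_mgf (a k) (s k) (hak k))]
  rw [Finset.prod_mul_distrib, ← Real.exp_sum]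
  -- evaluate the product of square roots
  have h2π : (0:ℝ) < 2 * π := by positivity
  have hprod1 : ∏ k, Real.sqrt (π / a k) = σ * Real.sqrt (2 * π) ^ N := by
    have hpt : ∀ k, Real.sqrt (π / a k)
        = Real.sqrt (2 * π) * (if k = i₀ then σ else 1) := by
      intro k
      simp only [ha]
      split
      · have : π / (1 / (2 * σ ^ 2)) = (2 * π) * σ ^ 2 := by field_simp
        rw [this, Real.sqrt_mul h2π.le, Real.sqrt_sq hσ.le]
      · have : π / (1 / 2 : ℝ) = 2 * π := by ring
        rw [this, mul_one]
    rw [Finset.prod_congr rfl (fun k _ => hpt k), Finset.prod_mul_distrib,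
      Finset.prod_const, Finset.card_univ, Fintype.card_fin,
      Finset.prod_ite_eq' Finset.univ i₀ (fun _ => σ)]
    simp [mul_comm]
  have hCone : C * (σ * Real.sqrt (2 * π) ^ N) = 1 := by
    have hsq : Real.sqrt (2 * π) ^ N = (2 * π) ^ ((N : ℝ) / 2) := by
      rw [Real.sqrt_eq_rpow, ← Real.rpow_natCast ((2 * π) ^ ((1:ℝ)/2)) N,
        ← Real.rpow_mul h2π.le]
      congr 1
      ring
    rw [hC, hsq]
    have : σ⁻¹ * (2 * π) ^ (-(N : ℝ) / 2) * (σ * (2 * π) ^ ((N:ℝ) / 2))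
        = (σ⁻¹ * σ) * ((2 * π) ^ (-(N : ℝ) / 2) * (2 * π) ^ ((N:ℝ) / 2)) := by ring
    rw [this, ← Real.rpow_add h2π, inv_mul_cancel₀ hσ0, one_mul,
      show -(N:ℝ)/2 + (N:ℝ)/2 = 0 by ring, Real.rpow_zero]
  -- evaluate the sum in the exponential
  have hsum : ∑ k, s k ^ 2 / (4 * a k)
      = (1 / 2) * (∑ k, t k ^ 2 - (1 - σ ^ 2) * ((Real.sqrt N)⁻¹ * ∑ k, t k) ^ 2) := by
    have hpt : ∀ k, s k ^ 2 / (4 * a k)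
        = s k ^ 2 / 2 + (if k = i₀ then (σ ^ 2 - 1) / 2 * s i₀ ^ 2 else 0) := by
      intro k
      simp only [ha]
      split
      · rename_i h; rw [h]; field_simp; ring
      · norm_num
    rw [Finset.sum_congr rfl (fun k _ => hpt k), Finset.sum_add_distrib,
      Finset.sum_ite_eq' Finset.univ i₀]
    simp only [Finset.mem_univ, if_true]
    rw [← fact4, ← fact5]
    have : ∑ k, s k ^ 2 / 2 = (∑ k, s k ^ 2) / 2 := by
      rw [Finset.sum_div]
    rw [this]
    ring
  rw [hprod1, ← mul_assoc, hCone, one_mul, hsum]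
end

section
/- Let z ∈ ℝ, σ > 0, and let N_1 > 1 and N_2 > 1 be integers with N = N_1 + N_2. Then: if 0 < σ < 1 one has σ·E_N(z;σ) > (σ·E_{N_1}(z;σ))·(σ·E_{N_2}(z;σ)); if σ = 1 one has σ·E_N(z;σ) = (σ·E_{N_1}(z;σ))·(σ·E_{N_2}(z;σ)); and if σ > 1 one has σ·E_N(z;σ) < (σ·E_{N_1}(z;σ))·(σ·E_{N_2}(z;σ)). In particular the sequence N ↦ ln(σ·E_N(z;σ)) is superadditive for σ < 1 and subadditive for σ > 1 (restricted to N_1, N_2 > 1). -/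
open MeasureTheory Real Finset Filter

/-- The expected polynomial `E_N(z;σ)` for real `z` (a positive real number).  For `N = 1`
the product over pairs `k < l` in `pdensity` is empty, so this agrees with the
one-dimensional formula `σ⁻¹(2π)^{-1/2} ∫ (x² + z²) exp(-x²/(2σ²)) dx`. -/
noncomputable def ENr (N : ℕ) (σ : ℝ) (z : ℝ) : ℝ :=
  ∫ x : Fin N → ℝ, (∏ n : Fin N, ((x n) ^ 2 + z ^ 2)) * pdensity N σ x

/-! ### Auxiliary definitions and lemmas -/

theorem pairSum (N : ℕ) (x : Fin N → ℝ) :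
    ∑ k : Fin N, ∑ l ∈ Finset.univ.filter (fun l => k < l), (x k - x l) ^ 2
      = N * ∑ n, (x n) ^ 2 - (∑ n, x n) ^ 2 := by
  have h1 : ∑ k : Fin N, ∑ l ∈ Finset.univ.filter (fun l => k < l), (x k - x l) ^ 2
      = ∑ k : Fin N, ∑ l ∈ Finset.univ.filter (fun l => l < k), (x k - x l) ^ 2 := by
    rw [Finset.sum_comm' (t' := Finset.univ) (s' := fun l => Finset.univ.filter (fun k => k < l))]
    · exact Finset.sum_congr rfl fun l _ => Finset.sum_congr rfl fun k _ => by ring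
    · intro i j; simp
  have h1' : ∀ k : Fin N, ∑ l ∈ Finset.univ.filter (fun l => l < k), (x k - x l) ^ 2
      = ∑ l ∈ Finset.univ.filter (fun l => ¬ k < l), (x k - x l) ^ 2 := by
    intro k
    refine Finset.sum_subset (fun l hl => ?_) (fun l hm hl => ?_)
    · simp only [Finset.mem_filter, Finset.mem_univ, true_and, not_lt] at hl ⊢
      exact hl.le
    · simp only [Finset.mem_filter, Finset.mem_univ, true_and, not_lt] at hl hm
      have : k = l := le_antisymm hl hm
      rw [this]; ring
  have h2 : 2 * (∑ k : Fin N, ∑ l ∈ Finset.univ.filter (fun l => k < l), (x k - x l) ^ 2)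
      = ∑ k : Fin N, ∑ l : Fin N, (x k - x l) ^ 2 := by
    rw [two_mul]; nth_rewrite 2 [h1]
    rw [← Finset.sum_add_distrib]
    refine Finset.sum_congr rfl fun k _ => ?_
    rw [h1' k, Finset.sum_filter_add_sum_filter_not]
  have h3 : ∑ k : Fin N, ∑ l : Fin N, (x k - x l) ^ 2
      = 2 * ((N : ℝ) * ∑ n, (x n) ^ 2) - 2 * (∑ n, x n) ^ 2 := by
    simp only [sub_sq, Finset.sum_add_distrib, Finset.sum_sub_distrib, Finset.sum_const,
      Finset.card_univ, Fintype.card_fin, nsmul_eq_mul, ← Finset.mul_sum, ← Finset.sum_mul]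
    ring
  linarith

noncomputable def KC (N : ℕ) : ℝ := (2 * π) ^ (-(N : ℝ) / 2)

noncomputable def FF (N : ℕ) (c z : ℝ) (x : Fin N → ℝ) : ℝ :=
  KC N * ((∏ n, ((x n) ^ 2 + z ^ 2)) *
    Real.exp (-(∑ n, (x n) ^ 2) / 2 + c * (∑ n, x n) ^ 2))

theorem KC_pos (N : ℕ) : 0 < KC N := rpow_pos_of_pos (by positivity) _

theorem KC_add (N₁ N₂ : ℕ) : KC (N₁ + N₂) = KC N₁ * KC N₂ := by
  unfold KC
  rw [← Real.rpow_add (by positivity)]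
  congr 1
  push_cast; ring

theorem FF_nonneg (N : ℕ) (c z : ℝ) (x : Fin N → ℝ) : 0 ≤ FF N c z x := by
  unfold FF
  have := KC_pos N
  positivity

theorem FF_continuous (N : ℕ) (c z : ℝ) : Continuous (FF N c z) := by
  unfold FF
  fun_prop

theorem sigma_pdensity (N : ℕ) (hN : 0 < N) (σ z : ℝ) (hσ : 0 < σ) (x : Fin N → ℝ) :
    σ * ((∏ n, ((x n) ^ 2 + z ^ 2)) * pdensity N σ x)
      = FF N ((1 - (σ ^ 2)⁻¹) / (2 * N)) z x := by
  have hNR : (0:ℝ) < (N:ℝ) := by exact_mod_cast hN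
  have hexp : (∑ k : Fin N, ∑ l ∈ Finset.univ.filter (fun l => k < l),
        (-(1 / (2 * (N : ℝ))) * (1 - (σ ^ 2)⁻¹) * (x k - x l) ^ 2))
      + ∑ n, (-(x n) ^ 2 / (2 * σ ^ 2))
      = -(∑ n, (x n) ^ 2) / 2 + ((1 - (σ ^ 2)⁻¹) / (2 * N)) * (∑ n, x n) ^ 2 := by
    have e1 : ∀ n : Fin N, -(x n) ^ 2 / (2 * σ ^ 2) = (-1 / (2 * σ ^ 2)) * (x n) ^ 2 := by
      intro n; ring
    simp_rw [e1, ← Finset.mul_sum, pairSum]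
    field_simp
    ring
  unfold pdensity FF KC
  rw [← Real.exp_sum]
  simp_rw [← Real.exp_sum]
  rw [← hexp, Real.exp_add]
  field_simp

theorem integrable_FF (N : ℕ) (c z : ℝ) (h : (N : ℝ) * c < 1 / 2) :
    Integrable (FF N c z) := by
  set m : ℝ := 1 / 2 - max ((N : ℝ) * c) 0 with hm_def
  have hm : 0 < m := by
    have : max ((N : ℝ) * c) 0 < 1 / 2 := by
      rcases le_or_gt ((N : ℝ) * c) 0 with h'|h'
      · simp [max_eq_right h']
      · simpa [max_eq_left h'.le] using h
    simp only [hm_def]; linarith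
  have h1d : Integrable fun t : ℝ => (t ^ 2 + z ^ 2) * rexp (-m * t ^ 2) := by
    have e : (fun t : ℝ => (t ^ 2 + z ^ 2) * rexp (-m * t ^ 2))
        = fun t => t ^ 2 * rexp (-m * t ^ 2) + z ^ 2 * rexp (-m * t ^ 2) :=
      funext fun t => by ring
    rw [e]
    have h2 := integrable_rpow_mul_exp_neg_mul_sq hm (s := 2) (by norm_num)
    have e2 : ∀ t : ℝ, t ^ (2 : ℝ) = t ^ 2 := fun t => by
      rw [show (2:ℝ) = ((2:ℕ):ℝ) by norm_num, Real.rpow_natCast]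
    simp_rw [e2] at h2
    exact h2.add ((integrable_exp_neg_mul_sq hm).const_mul _)
  have hbound : Integrable fun x : Fin N → ℝ =>
      KC N * ∏ n, ((x n) ^ 2 + z ^ 2) * rexp (-m * (x n) ^ 2) :=
    (Integrable.fin_nat_prod fun _ => h1d).const_mul _
  refine hbound.mono' (FF_continuous N c z).aestronglyMeasurable
    (Filter.Eventually.of_forall fun x => ?_)
  rw [Real.norm_of_nonneg (FF_nonneg N c z x)]
  unfold FF
  have hexp : rexp (-(∑ n, (x n) ^ 2) / 2 + c * (∑ n, x n) ^ 2)
      ≤ ∏ n, rexp (-m * (x n) ^ 2) := by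
    rw [← Real.exp_sum]
    apply Real.exp_le_exp.mpr
    have hsum : ∑ n, (-m * (x n) ^ 2) = -m * ∑ n, (x n) ^ 2 := by
      rw [Finset.mul_sum]
    rw [hsum]
    have hS2 : (0:ℝ) ≤ ∑ n, (x n) ^ 2 := Finset.sum_nonneg fun n _ => sq_nonneg _
    have hcs : c * (∑ n, x n) ^ 2 ≤ max ((N : ℝ) * c) 0 * ∑ n, (x n) ^ 2 := by
      rcases le_or_gt c 0 with h'|h'
      · have : c * (∑ n, x n) ^ 2 ≤ 0 := mul_nonpos_of_nonpos_of_nonneg h' (sq_nonneg _)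
        exact this.trans (mul_nonneg (le_max_right _ _) hS2)
      · have key : (∑ n, x n) ^ 2 ≤ (N : ℝ) * ∑ n, (x n) ^ 2 := by
          have := sq_sum_le_card_mul_sum_sq (s := (Finset.univ : Finset (Fin N))) (f := x)
          simpa using this
        calc c * (∑ n, x n) ^ 2 ≤ c * ((N : ℝ) * ∑ n, (x n) ^ 2) :=
              mul_le_mul_of_nonneg_left key h'.le
          _ = ((N : ℝ) * c) * ∑ n, (x n) ^ 2 := by ring
          _ ≤ max ((N : ℝ) * c) 0 * ∑ n, (x n) ^ 2 :=
              mul_le_mul_of_nonneg_right (le_max_left _ _) hS2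
    simp only [hm_def]; nlinarith
  calc KC N * ((∏ n, ((x n) ^ 2 + z ^ 2)) * rexp (-(∑ n, (x n) ^ 2) / 2 + c * (∑ n, x n) ^ 2))
      ≤ KC N * ((∏ n, ((x n) ^ 2 + z ^ 2)) * ∏ n, rexp (-m * (x n) ^ 2)) := by
        apply mul_le_mul_of_nonneg_left _ (KC_pos N).le
        exact mul_le_mul_of_nonneg_left hexp (Finset.prod_nonneg fun n _ => by positivity)
    _ = KC N * ∏ n, ((x n) ^ 2 + z ^ 2) * rexp (-m * (x n) ^ 2) := by
        rw [← Finset.prod_mul_distrib]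

/-! ### Splitting the integral over a product decomposition -/

noncomputable def Phi (N₁ N₂ : ℕ) : (Fin (N₁ + N₂) → ℝ) ≃ᵐ (Fin N₁ → ℝ) × (Fin N₂ → ℝ) :=
  ((MeasurableEquiv.piCongrLeft (fun _ : Fin (N₁ + N₂) => ℝ) finSumFinEquiv).symm).trans
    (MeasurableEquiv.sumPiEquivProdPi fun _ => ℝ)

theorem Phi_mp (N₁ N₂ : ℕ) : MeasurePreserving (Phi N₁ N₂) volume volume := by
  have h1 : MeasurePreserving
      (MeasurableEquiv.piCongrLeft (fun _ : Fin (N₁ + N₂) => ℝ) finSumFinEquiv).symm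
      volume volume :=
    (volume_measurePreserving_piCongrLeft _ _).symm _
  have h2 := volume_measurePreserving_sumPiEquivProdPi (fun _ : Fin N₁ ⊕ Fin N₂ => ℝ)
  exact h2.comp h1

theorem Phi_apply (N₁ N₂ : ℕ) (x : Fin (N₁ + N₂) → ℝ) :
    Phi N₁ N₂ x = (fun i => x (Fin.castAdd N₂ i), fun i => x (Fin.natAdd N₁ i)) := by
  unfold Phi
  ext i <;>
  · simp [MeasurableEquiv.trans, MeasurableEquiv.sumPiEquivProdPi,
      MeasurableEquiv.piCongrLeft, Equiv.sumPiEquivProdPi, Equiv.piCongrLeft_symm_apply]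

theorem integral_split (N₁ N₂ : ℕ) (f₁ : (Fin N₁ → ℝ) → ℝ) (f₂ : (Fin N₂ → ℝ) → ℝ) :
    (∫ x, f₁ x) * (∫ y, f₂ y)
      = ∫ x : Fin (N₁ + N₂) → ℝ,
          f₁ (fun i => x (Fin.castAdd N₂ i)) * f₂ (fun i => x (Fin.natAdd N₁ i)) := by
  have key := (Phi_mp N₁ N₂).integral_comp' (f := Phi N₁ N₂)
    (g := fun p : (Fin N₁ → ℝ) × (Fin N₂ → ℝ) => f₁ p.1 * f₂ p.2)
  calc (∫ x, f₁ x) * (∫ y, f₂ y)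
      = ∫ p, f₁ p.1 * f₂ p.2 ∂((volume : Measure (Fin N₁ → ℝ)).prod volume) :=
        (integral_prod_mul f₁ f₂).symm
    _ = ∫ p : (Fin N₁ → ℝ) × (Fin N₂ → ℝ), f₁ p.1 * f₂ p.2 := by
        rw [← MeasureTheory.Measure.volume_eq_prod]
    _ = ∫ x : Fin (N₁ + N₂) → ℝ, f₁ ((Phi N₁ N₂ x).1) * f₂ ((Phi N₁ N₂ x).2) := key.symm
    _ = _ := by simp_rw [Phi_apply]

theorem integrable_split (N₁ N₂ : ℕ) (f₁ : (Fin N₁ → ℝ) → ℝ) (f₂ : (Fin N₂ → ℝ) → ℝ)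
    (h₁ : Integrable f₁) (h₂ : Integrable f₂) :
    Integrable fun x : Fin (N₁ + N₂) → ℝ =>
      f₁ (fun i => x (Fin.castAdd N₂ i)) * f₂ (fun i => x (Fin.natAdd N₁ i)) := by
  have hB : Integrable (fun p : (Fin N₁ → ℝ) × (Fin N₂ → ℝ) => f₁ p.1 * f₂ p.2) := by
    rw [MeasureTheory.Measure.volume_eq_prod]; exact h₁.mul_prod h₂
  have hc := ((Phi_mp N₁ N₂).integrable_comp_emb (Phi N₁ N₂).measurableEmbedding).mpr hB
  have : (fun p : (Fin N₁ → ℝ) × (Fin N₂ → ℝ) => f₁ p.1 * f₂ p.2) ∘ (Phi N₁ N₂)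
      = fun x => f₁ (fun i => x (Fin.castAdd N₂ i)) * f₂ (fun i => x (Fin.natAdd N₁ i)) := by
    funext x; simp [Function.comp, Phi_apply]
  rwa [this] at hc

/-! ### Strict comparison of integrals -/

theorem strict_helper (N₁ N₂ : ℕ) (hN₁ : 0 < N₁) (hN₂ : 0 < N₂)
    (f g : (Fin (N₁ + N₂) → ℝ) → ℝ)
    (hf : Integrable f) (hg : Integrable g)
    (hle : ∀ x, g x ≤ f x)
    (hlt : ∀ x : Fin (N₁ + N₂) → ℝ,
      ((N₂ : ℝ) * ∑ i, x (Fin.castAdd N₂ i) ≠ (N₁ : ℝ) * ∑ i, x (Fin.natAdd N₁ i)) →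
      (∀ n, x n ≠ 0) → g x < f x) :
    ∫ x, g x < ∫ x, f x := by
  set D : (Fin (N₁ + N₂) → ℝ) → ℝ := fun x => f x - g x with hD
  have hDint : Integrable D := hf.sub hg
  have hDnonneg : ∀ x, 0 ≤ D x := fun x => sub_nonneg.mpr (hle x)
  set L : (Fin (N₁ + N₂) → ℝ) →ₗ[ℝ] ℝ :=
    { toFun := fun x => (N₂ : ℝ) * ∑ i, x (Fin.castAdd N₂ i)
        - (N₁ : ℝ) * ∑ i, x (Fin.natAdd N₁ i)
      map_add' := by intro a b; simp [Finset.sum_add_distrib]; ring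
      map_smul' := by intro r a; simp [← Finset.mul_sum]; ring } with hL
  set bad : Set (Fin (N₁ + N₂) → ℝ) :=
    {x | L x = 0} ∪ ⋃ n : Fin (N₁ + N₂), {x | x n = 0} with hbad_def
  have hker : LinearMap.ker L ≠ ⊤ := by
    intro h
    have hL0 := LinearMap.ker_eq_top.mp h
    set v : Fin (N₁ + N₂) → ℝ := fun j => if (j : ℕ) < N₁ then 1 else 0 with hv
    have h1 : L v = (N₂ : ℝ) * N₁ := by
      simp only [hL, LinearMap.coe_mk, AddHom.coe_mk, hv]
      have e1 : ∀ i : Fin N₁,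
          (if ((Fin.castAdd N₂ i : Fin (N₁ + N₂)) : ℕ) < N₁ then (1:ℝ) else 0) = 1 := by
        intro i; simp [Fin.coe_castAdd, i.isLt]
      have e2 : ∀ i : Fin N₂,
          (if ((Fin.natAdd N₁ i : Fin (N₁ + N₂)) : ℕ) < N₁ then (1:ℝ) else 0) = 0 := by
        intro i; simp [Fin.coe_natAdd]
      rw [Finset.sum_congr rfl fun i _ => e1 i, Finset.sum_congr rfl fun i _ => e2 i]
      simp
    rw [hL0] at h1
    simp at h1
    rcases h1 with h1 | h1
    · exact absurd h1 (by exact_mod_cast hN₂.ne')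
    · exact absurd h1 (by exact_mod_cast hN₁.ne')
  have hbad : volume bad = 0 := by
    apply measure_union_null
    · have : {x : Fin (N₁ + N₂) → ℝ | L x = 0} = (LinearMap.ker L : Set _) := by
        ext x; simp [LinearMap.mem_ker]
      rw [this]; exact Measure.addHaar_submodule _ _ hker
    · refine measure_iUnion_null fun n => ?_
      have : {x : Fin (N₁ + N₂) → ℝ | x n = 0}
          = (LinearMap.ker
              (LinearMap.proj (R := ℝ) (φ := fun _ : Fin (N₁ + N₂) => ℝ) n) : Set _) := by
        ext x; simp [LinearMap.mem_ker]
      rw [this]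
      refine Measure.addHaar_submodule _ _ ?_
      intro h
      have hL0 := LinearMap.ker_eq_top.mp h
      have h1 := DFunLike.congr_fun hL0 (Pi.single n (1:ℝ))
      simp [LinearMap.proj_apply] at h1
  have hsupp : Set.univ ⊆ Function.support D ∪ bad := by
    intro x _
    by_cases hx : x ∈ bad
    · exact Or.inr hx
    · left
      simp only [hbad_def, Set.mem_union, Set.mem_setOf_eq, Set.mem_iUnion, not_or,
        not_exists] at hx
      have h1 : (N₂ : ℝ) * ∑ i, x (Fin.castAdd N₂ i) ≠ (N₁ : ℝ) * ∑ i, x (Fin.natAdd N₁ i) := by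
        intro hcontra
        exact hx.1 (by simp only [hL, LinearMap.coe_mk, AddHom.coe_mk]; linarith)
      have h2 : ∀ n, x n ≠ 0 := fun n => hx.2 n
      exact (sub_pos.mpr (hlt x h1 h2)).ne'
  have hpos : 0 < volume (Function.support D) := by
    by_contra hcon
    push_neg at hcon
    have h0 : volume (Function.support D) = 0 := le_antisymm hcon zero_le
    have huniv : volume (Set.univ : Set (Fin (N₁ + N₂) → ℝ)) ≠ 0 :=
      (isOpen_univ.measure_pos volume Set.univ_nonempty).ne'
    have hle2 : volume (Set.univ : Set (Fin (N₁ + N₂) → ℝ))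
        ≤ volume (Function.support D) + volume bad :=
      (measure_mono hsupp).trans (measure_union_le _ _)
    rw [h0, hbad, add_zero] at hle2
    exact huniv (le_antisymm hle2 zero_le)
  have hint : 0 < ∫ x, D x :=
    (integral_pos_iff_support_of_nonneg hDnonneg hDint).mpr hpos
  rw [hD] at hint
  rw [integral_sub hf hg] at hint
  linarith

/-! ### Pointwise splitting of `FF` -/

theorem FF_eq (N : ℕ) (c z : ℝ) (x : Fin N → ℝ) :
    FF N c z x = (KC N * ((∏ n, ((x n) ^ 2 + z ^ 2)) * rexp (-(∑ n, (x n) ^ 2) / 2)))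
      * rexp (c * (∑ n, x n) ^ 2) := by
  unfold FF
  rw [Real.exp_add]
  ring

theorem g_split (N₁ N₂ : ℕ) (c₁ c₂ z : ℝ) (x : Fin (N₁ + N₂) → ℝ) :
    FF N₁ c₁ z (fun i => x (Fin.castAdd N₂ i)) * FF N₂ c₂ z (fun i => x (Fin.natAdd N₁ i))
      = (KC (N₁ + N₂) * ((∏ n, ((x n) ^ 2 + z ^ 2)) * rexp (-(∑ n, (x n) ^ 2) / 2)))
        * rexp (c₁ * (∑ i, x (Fin.castAdd N₂ i)) ^ 2 + c₂ * (∑ i, x (Fin.natAdd N₁ i)) ^ 2) := by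
  unfold FF
  rw [KC_add, Fin.prod_univ_add (f := fun n => ((x n) ^ 2 + z ^ 2)),
    Fin.sum_univ_add (f := fun n => (x n) ^ 2)]
  calc (KC N₁ * ((∏ i : Fin N₁, ((x (Fin.castAdd N₂ i)) ^ 2 + z ^ 2)) *
          rexp (-(∑ i : Fin N₁, (x (Fin.castAdd N₂ i)) ^ 2) / 2
            + c₁ * (∑ i, x (Fin.castAdd N₂ i)) ^ 2)))
        * (KC N₂ * ((∏ i : Fin N₂, ((x (Fin.natAdd N₁ i)) ^ 2 + z ^ 2)) *
          rexp (-(∑ i : Fin N₂, (x (Fin.natAdd N₁ i)) ^ 2) / 2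
            + c₂ * (∑ i, x (Fin.natAdd N₁ i)) ^ 2)))
      = (KC N₁ * KC N₂) * (((∏ i : Fin N₁, ((x (Fin.castAdd N₂ i)) ^ 2 + z ^ 2)) *
          (∏ i : Fin N₂, ((x (Fin.natAdd N₁ i)) ^ 2 + z ^ 2))) *
          (rexp (-(∑ i : Fin N₁, (x (Fin.castAdd N₂ i)) ^ 2) / 2
            + c₁ * (∑ i, x (Fin.castAdd N₂ i)) ^ 2) *
           rexp (-(∑ i : Fin N₂, (x (Fin.natAdd N₁ i)) ^ 2) / 2
            + c₂ * (∑ i, x (Fin.natAdd N₁ i)) ^ 2))) := by ring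
    _ = _ := by
        rw [← Real.exp_add]
        rw [show (-(∑ i : Fin N₁, (x (Fin.castAdd N₂ i)) ^ 2) / 2
            + c₁ * (∑ i, x (Fin.castAdd N₂ i)) ^ 2)
            + (-(∑ i : Fin N₂, (x (Fin.natAdd N₁ i)) ^ 2) / 2
            + c₂ * (∑ i, x (Fin.natAdd N₁ i)) ^ 2)
          = -(∑ i : Fin N₁, (x (Fin.castAdd N₂ i)) ^ 2
              + ∑ i : Fin N₂, (x (Fin.natAdd N₁ i)) ^ 2) / 2
            + (c₁ * (∑ i, x (Fin.castAdd N₂ i)) ^ 2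
              + c₂ * (∑ i, x (Fin.natAdd N₁ i)) ^ 2) from by ring]
        rw [Real.exp_add]
        ring

theorem exponent_identity (N₁ N₂ : ℕ) (hN₁ : 0 < N₁) (hN₂ : 0 < N₂) (κ s₁ s₂ : ℝ) :
    (κ / (2 * ((N₁ : ℝ) + N₂))) * (s₁ + s₂) ^ 2
      - ((κ / (2 * N₁)) * s₁ ^ 2 + (κ / (2 * N₂)) * s₂ ^ 2)
    = -κ * ((N₂ : ℝ) * s₁ - (N₁ : ℝ) * s₂) ^ 2 / (2 * N₁ * N₂ * ((N₁ : ℝ) + N₂)) := by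
  have h1 : ((N₁ : ℝ)) ≠ 0 := Nat.cast_ne_zero.mpr hN₁.ne'
  have h2 : ((N₂ : ℝ)) ≠ 0 := Nat.cast_ne_zero.mpr hN₂.ne'
  have h3 : ((N₁ : ℝ) + N₂) ≠ 0 := by positivity
  field_simp
  ring

/-- Sub/super-multiplicativity of `σ E_N(z;σ)` in `N`: for real `z`, `σ > 0` and integers
`N₁, N₂ > 1` with `N = N₁ + N₂`, `σE_N > (σE_{N₁})(σE_{N₂})` if `σ < 1`, `=` if `σ = 1`,
and `<` if `σ > 1`. -/
theorem EN_sub_super_multiplicative (z σ : ℝ) (hσ : 0 < σ) (N₁ N₂ : ℕ)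
    (h₁ : 1 < N₁) (h₂ : 1 < N₂) :
    (σ < 1 → σ * ENr (N₁ + N₂) σ z > (σ * ENr N₁ σ z) * (σ * ENr N₂ σ z)) ∧
    (σ = 1 → σ * ENr (N₁ + N₂) σ z = (σ * ENr N₁ σ z) * (σ * ENr N₂ σ z)) ∧
    (1 < σ → σ * ENr (N₁ + N₂) σ z < (σ * ENr N₁ σ z) * (σ * ENr N₂ σ z)) := by
  have hN₁ : 0 < N₁ := by omega
  have hN₂ : 0 < N₂ := by omega
  have hN : 0 < N₁ + N₂ := by omega
  have hN₁R : (0:ℝ) < (N₁ : ℝ) := by exact_mod_cast hN₁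
  have hN₂R : (0:ℝ) < (N₂ : ℝ) := by exact_mod_cast hN₂
  have hinvpos : 0 < (σ ^ 2)⁻¹ := by positivity
  -- reduction to the Gaussian-type integrals
  have hEN : ∀ M : ℕ, 0 < M →
      σ * ENr M σ z = ∫ x : Fin M → ℝ, FF M ((1 - (σ ^ 2)⁻¹) / (2 * (M:ℝ))) z x := by
    intro M hM
    unfold ENr
    rw [← integral_const_mul]
    exact integral_congr_ae (Filter.Eventually.of_forall fun x => sigma_pdensity M hM σ z hσ x)
  have hI : ∀ M : ℕ, 0 < M → Integrable (FF M ((1 - (σ ^ 2)⁻¹) / (2 * (M:ℝ))) z) := by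
    intro M hM
    apply integrable_FF
    have hMR : (0:ℝ) < (M:ℝ) := by exact_mod_cast hM
    rw [show (M:ℝ) * ((1 - (σ ^ 2)⁻¹) / (2 * (M:ℝ))) = (1 - (σ ^ 2)⁻¹) / 2 from by
      field_simp]
    linarith
  set c : ℝ := (1 - (σ ^ 2)⁻¹) / (2 * ((N₁ + N₂ : ℕ) : ℝ)) with hc_def
  set c₁ : ℝ := (1 - (σ ^ 2)⁻¹) / (2 * (N₁ : ℝ)) with hc₁_def
  set c₂ : ℝ := (1 - (σ ^ 2)⁻¹) / (2 * (N₂ : ℝ)) with hc₂_def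
  set f : (Fin (N₁ + N₂) → ℝ) → ℝ := FF (N₁ + N₂) c z with hf_def
  set g : (Fin (N₁ + N₂) → ℝ) → ℝ := fun x =>
    FF N₁ c₁ z (fun i => x (Fin.castAdd N₂ i)) * FF N₂ c₂ z (fun i => x (Fin.natAdd N₁ i))
    with hg_def
  have hIf : Integrable f := hI _ hN
  have hIg : Integrable g := integrable_split N₁ N₂ _ _ (hI _ hN₁) (hI _ hN₂)
  have hEsum : σ * ENr (N₁ + N₂) σ z = ∫ x, f x := hEN _ hN
  have hprod : (σ * ENr N₁ σ z) * (σ * ENr N₂ σ z) = ∫ x, g x := by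
    rw [hEN N₁ hN₁, hEN N₂ hN₂, integral_split]
  -- pointwise descriptions
  have hfx : ∀ x, f x = (KC (N₁ + N₂) * ((∏ n, ((x n) ^ 2 + z ^ 2)) *
      rexp (-(∑ n, (x n) ^ 2) / 2))) * rexp (c * (∑ n, x n) ^ 2) := fun x => FF_eq _ _ _ x
  have hgx : ∀ x, g x = (KC (N₁ + N₂) * ((∏ n, ((x n) ^ 2 + z ^ 2)) *
      rexp (-(∑ n, (x n) ^ 2) / 2))) *
        rexp (c₁ * (∑ i, x (Fin.castAdd N₂ i)) ^ 2 + c₂ * (∑ i, x (Fin.natAdd N₁ i)) ^ 2) :=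
    fun x => g_split N₁ N₂ c₁ c₂ z x
  have hAA_nonneg : ∀ x : Fin (N₁ + N₂) → ℝ,
      0 ≤ KC (N₁ + N₂) * ((∏ n, ((x n) ^ 2 + z ^ 2)) * rexp (-(∑ n, (x n) ^ 2) / 2)) := by
    intro x
    have := KC_pos (N₁ + N₂)
    positivity
  have hAA_pos : ∀ x : Fin (N₁ + N₂) → ℝ, (∀ n, x n ≠ 0) →
      0 < KC (N₁ + N₂) * ((∏ n, ((x n) ^ 2 + z ^ 2)) * rexp (-(∑ n, (x n) ^ 2) / 2)) := by
    intro x hx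
    have h1 : 0 < ∏ n, ((x n) ^ 2 + z ^ 2) := by
      apply Finset.prod_pos
      intro n _
      have h2 : 0 < (x n) ^ 2 :=
        lt_of_le_of_ne (sq_nonneg _) (Ne.symm (pow_ne_zero 2 (hx n)))
      nlinarith [sq_nonneg z]
    have := KC_pos (N₁ + N₂)
    positivity
  have hP : (0:ℝ) < 2 * (N₁:ℝ) * (N₂:ℝ) * ((N₁:ℝ) + (N₂:ℝ)) := by positivity
  have hcomp : ∀ x : Fin (N₁ + N₂) → ℝ,
      c * (∑ n, x n) ^ 2 - (c₁ * (∑ i, x (Fin.castAdd N₂ i)) ^ 2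
        + c₂ * (∑ i, x (Fin.natAdd N₁ i)) ^ 2)
      = -(1 - (σ ^ 2)⁻¹) * ((N₂:ℝ) * (∑ i, x (Fin.castAdd N₂ i))
          - (N₁:ℝ) * (∑ i, x (Fin.natAdd N₁ i))) ^ 2
        / (2 * (N₁:ℝ) * (N₂:ℝ) * ((N₁:ℝ) + (N₂:ℝ))) := by
    intro x
    have hcast : ((N₁ + N₂ : ℕ) : ℝ) = (N₁:ℝ) + (N₂:ℝ) := by push_cast; ring
    have hsum : (∑ n, x n) = (∑ i, x (Fin.castAdd N₂ i)) + (∑ i, x (Fin.natAdd N₁ i)) :=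
      Fin.sum_univ_add _
    rw [hc_def, hc₁_def, hc₂_def, hcast, hsum]
    exact exponent_identity N₁ N₂ hN₁ hN₂ _ _ _
  refine ⟨?_, ?_, ?_⟩
  · -- σ < 1 : supermultiplicative
    intro hσ1
    have hκ : 1 - (σ ^ 2)⁻¹ < 0 := by
      have h2 : σ ^ 2 < 1 := by nlinarith
      have := (one_lt_inv₀ (show (0:ℝ) < σ ^ 2 by positivity)).mpr h2
      linarith
    rw [hEsum, hprod]
    refine gt_iff_lt.mpr (strict_helper N₁ N₂ hN₁ hN₂ f g hIf hIg ?_ ?_)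
    · intro x
      rw [hfx x, hgx x]
      refine mul_le_mul_of_nonneg_left (Real.exp_le_exp.mpr ?_) (hAA_nonneg x)
      have hd := hcomp x
      have : 0 ≤ -(1 - (σ ^ 2)⁻¹) * ((N₂:ℝ) * (∑ i, x (Fin.castAdd N₂ i))
          - (N₁:ℝ) * (∑ i, x (Fin.natAdd N₁ i))) ^ 2
          / (2 * (N₁:ℝ) * (N₂:ℝ) * ((N₁:ℝ) + (N₂:ℝ))) :=
        div_nonneg (mul_nonneg (by linarith) (sq_nonneg _)) hP.le
      linarith
    · intro x hne hx0
      rw [hfx x, hgx x]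
      refine mul_lt_mul_of_pos_left (Real.exp_lt_exp.mpr ?_) (hAA_pos x hx0)
      have hd := hcomp x
      have hsq : 0 < ((N₂:ℝ) * (∑ i, x (Fin.castAdd N₂ i))
          - (N₁:ℝ) * (∑ i, x (Fin.natAdd N₁ i))) ^ 2 := by
        have h0 : ((N₂:ℝ) * (∑ i, x (Fin.castAdd N₂ i))
            - (N₁:ℝ) * (∑ i, x (Fin.natAdd N₁ i))) ≠ 0 := sub_ne_zero.mpr hne
        exact lt_of_le_of_ne (sq_nonneg _) (Ne.symm (pow_ne_zero 2 h0))
      have : 0 < -(1 - (σ ^ 2)⁻¹) * ((N₂:ℝ) * (∑ i, x (Fin.castAdd N₂ i))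
          - (N₁:ℝ) * (∑ i, x (Fin.natAdd N₁ i))) ^ 2
          / (2 * (N₁:ℝ) * (N₂:ℝ) * ((N₁:ℝ) + (N₂:ℝ))) :=
        div_pos (mul_pos (by linarith) hsq) hP
      linarith
  · -- σ = 1 : multiplicative
    intro hσ1
    subst hσ1
    rw [hEsum, hprod]
    refine integral_congr_ae (Filter.Eventually.of_forall fun x => ?_)
    rw [hfx x, hgx x]
    congr 1
    rw [show c = 0 from by rw [hc_def]; norm_num,
      show c₁ = 0 from by rw [hc₁_def]; norm_num,
      show c₂ = 0 from by rw [hc₂_def]; norm_num]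
    norm_num
  · -- 1 < σ : submultiplicative
    intro hσ1
    have hκ : 0 < 1 - (σ ^ 2)⁻¹ := by
      have h2 : 1 < σ ^ 2 := by nlinarith
      have := (inv_lt_one₀ (show (0:ℝ) < σ ^ 2 by positivity)).mpr h2
      linarith
    rw [hEsum, hprod]
    refine strict_helper N₁ N₂ hN₁ hN₂ g f hIg hIf ?_ ?_
    · intro x
      rw [hfx x, hgx x]
      refine mul_le_mul_of_nonneg_left (Real.exp_le_exp.mpr ?_) (hAA_nonneg x)
      have hd := hcomp x
      have : -(1 - (σ ^ 2)⁻¹) * ((N₂:ℝ) * (∑ i, x (Fin.castAdd N₂ i))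
          - (N₁:ℝ) * (∑ i, x (Fin.natAdd N₁ i))) ^ 2
          / (2 * (N₁:ℝ) * (N₂:ℝ) * ((N₁:ℝ) + (N₂:ℝ))) ≤ 0 :=
        div_nonpos_of_nonpos_of_nonneg
          (mul_nonpos_of_nonpos_of_nonneg (by linarith) (sq_nonneg _)) hP.le
      linarith
    · intro x hne hx0
      rw [hfx x, hgx x]
      refine mul_lt_mul_of_pos_left (Real.exp_lt_exp.mpr ?_) (hAA_pos x hx0)
      have hd := hcomp x
      have hsq : 0 < ((N₂:ℝ) * (∑ i, x (Fin.castAdd N₂ i))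
          - (N₁:ℝ) * (∑ i, x (Fin.natAdd N₁ i))) ^ 2 := by
        have h0 : ((N₂:ℝ) * (∑ i, x (Fin.castAdd N₂ i))
            - (N₁:ℝ) * (∑ i, x (Fin.natAdd N₁ i))) ≠ 0 := sub_ne_zero.mpr hne
        exact lt_of_le_of_ne (sq_nonneg _) (Ne.symm (pow_ne_zero 2 h0))
      have : -(1 - (σ ^ 2)⁻¹) * ((N₂:ℝ) * (∑ i, x (Fin.castAdd N₂ i))
          - (N₁:ℝ) * (∑ i, x (Fin.natAdd N₁ i))) ^ 2
          / (2 * (N₁:ℝ) * (N₂:ℝ) * ((N₁:ℝ) + (N₂:ℝ))) < 0 :=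
        div_neg_of_neg_of_pos (mul_neg_of_neg_of_pos (by linarith) hsq) hP
      linarith
end

section
/- Let z ∈ ℝ, σ > 0, and let N > 1 be an integer. Then: if 0 < σ < 1 one has σ·E_N(z;σ) < (1 + z^2)^N; if σ = 1 one has σ·E_N(z;σ) = (1 + z^2)^N; and if σ > 1 one has σ·E_N(z;σ) > (1 + z^2)^N. -/
open MeasureTheory Real Finset Filter

lemma pair_sum_identity {N : ℕ} (x : Fin N → ℝ) :
    ∑ k : Fin N, ∑ l ∈ Finset.univ.filter (fun l => k < l), (x k - x l) ^ 2
      = N * (∑ n, x n ^ 2) - (∑ n, x n) ^ 2 := by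
  classical
  set f : Fin N × Fin N → ℝ := fun p => (x p.1 - x p.2) ^ 2 with hf
  set s : Finset (Fin N × Fin N) := Finset.univ ×ˢ Finset.univ with hs
  have h1 : ∑ k : Fin N, ∑ l ∈ Finset.univ.filter (fun l => k < l), (x k - x l) ^ 2
      = ∑ p ∈ s.filter (fun p => p.1 < p.2), f p := by
    rw [Finset.sum_filter, hs, Finset.sum_product]
    simp [Finset.sum_filter, hf]
  have h2 : ∑ p ∈ s.filter (fun p => p.1 < p.2), f p
      = ∑ p ∈ s.filter (fun p => p.2 < p.1), f p := by
    refine Finset.sum_nbij' (fun p => p.swap) (fun p => p.swap) ?_ ?_ ?_ ?_ ?_ <;>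
      simp +contextual [hf, hs]
    intro a b hab
    ring
  have h3 : ∑ p ∈ s, f p = ∑ p ∈ s.filter (fun p => p.1 < p.2), f p
      + ∑ p ∈ s.filter (fun p => ¬ p.1 < p.2), f p :=
    (Finset.sum_filter_add_sum_filter_not s _ f).symm
  have h4 : ∑ p ∈ s.filter (fun p => ¬ p.1 < p.2), f p
      = ∑ p ∈ s.filter (fun p => p.2 < p.1), f p := by
    rw [← Finset.sum_filter_add_sum_filter_not (s.filter (fun p => ¬ p.1 < p.2))
      (fun p => p.2 < p.1) f, Finset.filter_filter, Finset.filter_filter]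
    have e1 : s.filter (fun p => ¬ p.1 < p.2 ∧ p.2 < p.1) = s.filter (fun p => p.2 < p.1) := by
      refine Finset.filter_congr fun p _ => ?_
      constructor
      · exact fun h => h.2
      · exact fun h => ⟨lt_asymm h, h⟩
    have e2 : ∑ p ∈ s.filter (fun p => ¬ p.1 < p.2 ∧ ¬ p.2 < p.1), f p = 0 := by
      refine Finset.sum_eq_zero fun p hp => ?_
      simp only [Finset.mem_filter] at hp
      have : p.1 = p.2 := le_antisymm (not_lt.mp hp.2.2) (not_lt.mp hp.2.1)
      simp [hf, this]
    rw [e1, e2, add_zero]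
  have h5 : ∑ p ∈ s, f p = 2 * ((N : ℝ) * (∑ n, x n ^ 2) - (∑ n, x n) ^ 2) := by
    rw [hs, Finset.sum_product]
    simp only [hf, sub_sq]
    simp only [Finset.sum_add_distrib, Finset.sum_sub_distrib, Finset.sum_const,
      Finset.card_univ, Fintype.card_fin, nsmul_eq_mul, ← Finset.mul_sum, ← Finset.sum_mul]
    ring
  rw [h1]
  have := h3
  rw [h4, ← h2] at this
  rw [h5] at this
  linarith



noncomputable def Gfun (N : ℕ) (z c : ℝ) (x : Fin N → ℝ) : ℝ :=
  (2 * π) ^ (-(N : ℝ) / 2) *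
    ((∏ n, ((x n) ^ 2 + z ^ 2)) *
      Real.exp (-(∑ n, (x n) ^ 2) / 2 + c * (∑ n, x n) ^ 2 / (2 * N)))

lemma key_eq {N : ℕ} (hN : 0 < N) {σ : ℝ} (hσ : 0 < σ) (z : ℝ) (x : Fin N → ℝ) :
    σ * ((∏ n, ((x n) ^ 2 + z ^ 2)) * pdensity N σ x) = Gfun N z (1 - (σ ^ 2)⁻¹) x := by
  have hσ' : σ ≠ 0 := hσ.ne'
  have hN' : (N : ℝ) ≠ 0 := Nat.cast_ne_zero.mpr hN.ne'
  unfold pdensity Gfun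
  rw [← Real.exp_sum]
  simp_rw [← Real.exp_sum]
  have hsum : ∑ k : Fin N, ∑ l ∈ Finset.univ.filter (fun l => k < l),
      (-(1 / (2 * (N : ℝ))) * (1 - (σ ^ 2)⁻¹) * (x k - x l) ^ 2)
      = -(1 / (2 * (N : ℝ))) * (1 - (σ ^ 2)⁻¹)
        * ((N : ℝ) * (∑ n, x n ^ 2) - (∑ n, x n) ^ 2) := by
    simp_rw [← Finset.mul_sum]
    rw [pair_sum_identity]
  have hsum2 : ∑ n : Fin N, (-(x n) ^ 2 / (2 * σ ^ 2)) = -(∑ n, (x n) ^ 2) / (2 * σ ^ 2) := by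
    rw [← Finset.sum_div, ← Finset.sum_neg_distrib]
  have hexp : -(1 / (2 * (N : ℝ))) * (1 - (σ ^ 2)⁻¹)
        * ((N : ℝ) * (∑ n, x n ^ 2) - (∑ n, x n) ^ 2) + -(∑ n, (x n) ^ 2) / (2 * σ ^ 2)
      = -(∑ n, (x n) ^ 2) / 2 + (1 - (σ ^ 2)⁻¹) * (∑ n, x n) ^ 2 / (2 * (N : ℝ)) := by
    field_simp
    ring
  rw [hsum, hsum2, ← hexp, Real.exp_add]
  field_simp


lemma integral_sq_exp : ∫ x : ℝ, x ^ 2 * Real.exp (-(1/2 : ℝ) * x ^ 2) = Real.sqrt (2 * π) := by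
  have h0 : ∫ x : ℝ, x ^ 2 * Real.exp (-(1/2 : ℝ) * x ^ 2)
      = 2 * ∫ x in Set.Ioi (0:ℝ), x ^ 2 * Real.exp (-(1/2 : ℝ) * x ^ 2) := by
    rw [← integral_comp_abs (f := fun x => x ^ 2 * Real.exp (-(1/2 : ℝ) * x ^ 2))]
    congr 1; funext x; rw [sq_abs]
  have h1 : ∫ x in Set.Ioi (0:ℝ), x ^ 2 * Real.exp (-(1/2 : ℝ) * x ^ 2)
      = ((1:ℝ)/2) ^ (-((2:ℝ) + 1) / 2) * (1 / 2) * Real.Gamma (((2:ℝ) + 1) / 2) := by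
    rw [← integral_rpow_mul_exp_neg_mul_rpow (p := 2) (q := 2) (b := 1/2) (by norm_num)
      (by norm_num) (by norm_num)]
    refine setIntegral_congr_fun measurableSet_Ioi fun x hx => ?_
    rw [show ((2:ℝ)) = ((2:ℕ):ℝ) by norm_num, Real.rpow_natCast]
  have hG : Real.Gamma (((2:ℝ) + 1) / 2) = Real.sqrt π / 2 := by
    have : ((2:ℝ) + 1) / 2 = 1/2 + 1 := by norm_num
    rw [this, Real.Gamma_add_one (by norm_num), Real.Gamma_one_half_eq]
    ring
  have hb : ((1:ℝ)/2) ^ (-((2:ℝ) + 1) / 2) = 2 * Real.sqrt 2 := by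
    rw [show (-((2:ℝ)+1)/2) = -(3/2 : ℝ) by norm_num, Real.rpow_neg (by norm_num),
      show ((1:ℝ)/2) = 2⁻¹ by norm_num, Real.inv_rpow (by norm_num), inv_inv,
      show (3/2 : ℝ) = 1 + 1/2 by norm_num, Real.rpow_add (by norm_num), Real.rpow_one,
      ← Real.sqrt_eq_rpow]
  rw [h0, h1, hG, hb, Real.sqrt_mul (by norm_num)]
  ring

lemma integral_gauss_half : ∫ x : ℝ, Real.exp (-(1/2 : ℝ) * x ^ 2) = Real.sqrt (2 * π) := by
  rw [integral_gaussian]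
  congr 1
  rw [div_div_eq_mul_div, div_one]
  ring

lemma oneD (z : ℝ) :
    ∫ t : ℝ, (2 * π) ^ (-(1:ℝ) / 2) * ((t ^ 2 + z ^ 2) * Real.exp (-(1/2 : ℝ) * t ^ 2))
      = 1 + z ^ 2 := by
  have hint1 : Integrable (fun t : ℝ => t ^ 2 * Real.exp (-(1/2 : ℝ) * t ^ 2)) := by
    have h := integrable_rpow_mul_exp_neg_mul_sq (b := 1/2) (by norm_num) (s := 2) (by norm_num)
    simpa [Real.rpow_two] using h
  have hint2 : Integrable (fun t : ℝ => z ^ 2 * Real.exp (-(1/2 : ℝ) * t ^ 2)) :=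
    (integrable_exp_neg_mul_sq (by norm_num)).const_mul _
  have hsplit : ∫ t : ℝ, (t ^ 2 + z ^ 2) * Real.exp (-(1/2 : ℝ) * t ^ 2)
      = (∫ t : ℝ, t ^ 2 * Real.exp (-(1/2 : ℝ) * t ^ 2))
        + ∫ t : ℝ, z ^ 2 * Real.exp (-(1/2 : ℝ) * t ^ 2) := by
    rw [← integral_add hint1 hint2]
    congr 1; funext t; ring
  rw [integral_const_mul, hsplit, integral_sq_exp, integral_const_mul, integral_gauss_half]
  have hs : (2 * π) ^ (-(1:ℝ) / 2) = (Real.sqrt (2 * π))⁻¹ := by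
    rw [show (-(1:ℝ)/2) = -(1/2 : ℝ) by norm_num, Real.rpow_neg (by positivity),
      ← Real.sqrt_eq_rpow]
  rw [hs]
  have hpos : (0:ℝ) < Real.sqrt (2 * π) := Real.sqrt_pos.mpr (by positivity)
  field_simp


lemma Gfun_cont {N : ℕ} (z c : ℝ) : Continuous (Gfun N z c) := by
  unfold Gfun
  fun_prop

lemma Gfun_nonneg {N : ℕ} (z c : ℝ) (x : Fin N → ℝ) : 0 ≤ Gfun N z c x := by
  unfold Gfun
  have : (0:ℝ) ≤ ∏ n, ((x n) ^ 2 + z ^ 2) := Finset.prod_nonneg fun n _ => by positivity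
  positivity

lemma Gfun_as_prod {N : ℕ} (z : ℝ) (x : Fin N → ℝ) :
    Gfun N z 0 x
      = ∏ n, (2 * π) ^ (-(1:ℝ) / 2) * ((x n ^ 2 + z ^ 2) * Real.exp (-(1/2 : ℝ) * (x n) ^ 2)) := by
  unfold Gfun
  rw [Finset.prod_mul_distrib, Finset.prod_mul_distrib, Finset.prod_const, ← Real.exp_sum,
    Finset.card_univ, Fintype.card_fin]
  rw [show ((2 * π) ^ (-(1:ℝ) / 2)) ^ N = (2 * π) ^ (-(N:ℝ) / 2) by
    rw [← Real.rpow_natCast ((2 * π) ^ (-(1:ℝ)/2)) N, ← Real.rpow_mul (by positivity)]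
    congr 1; ring]
  rw [show (∑ n, (-(1/2 : ℝ) * (x n) ^ 2)) = (-∑ n, (x n) ^ 2) / 2 + 0 * (∑ n, x n) ^ 2 / (2 * (N:ℝ)) by
    rw [← Finset.mul_sum]; ring]

lemma oneD_integrable (z : ℝ) {a : ℝ} (ha : 0 < a) :
    Integrable (fun t : ℝ => (t ^ 2 + z ^ 2) * Real.exp (-(a/2) * t ^ 2)) := by
  have h1 : Integrable (fun t : ℝ => t ^ 2 * Real.exp (-(a/2) * t ^ 2)) := by
    have h := integrable_rpow_mul_exp_neg_mul_sq (b := a/2) (by positivity) (s := 2)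
      (by norm_num)
    simpa [Real.rpow_two] using h
  have h2 : Integrable (fun t : ℝ => z ^ 2 * Real.exp (-(a/2) * t ^ 2)) :=
    (integrable_exp_neg_mul_sq (by positivity)).const_mul _
  have := h1.add h2
  refine this.congr (Eventually.of_forall fun t => ?_)
  simp only [Pi.add_apply]
  ring

lemma Gfun_integrable {N : ℕ} (hN : 0 < N) (z : ℝ) {c : ℝ} (hc : c < 1) :
    Integrable (Gfun N z c) := by
  set a : ℝ := 1 - max c 0 with ha_def
  have ha : 0 < a := by
    rcases le_or_gt c 0 with h | h
    · simp [ha_def, max_eq_right h]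
    · simp [ha_def, max_eq_left h.le]; linarith
  have hbound : ∀ x : Fin N → ℝ, Gfun N z c x
      ≤ (2 * π) ^ (-(N : ℝ) / 2) * ∏ n, ((x n) ^ 2 + z ^ 2) * Real.exp (-(a/2) * (x n) ^ 2) := by
    intro x
    have hprodexp : ∏ n, ((x n) ^ 2 + z ^ 2) * Real.exp (-(a/2) * (x n) ^ 2)
        = (∏ n, ((x n) ^ 2 + z ^ 2)) * Real.exp (∑ n, -(a/2) * (x n) ^ 2) := by
      rw [Finset.prod_mul_distrib, Real.exp_sum]
    rw [hprodexp]
    unfold Gfun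
    have hprodnn : (0:ℝ) ≤ ∏ n, ((x n) ^ 2 + z ^ 2) :=
      Finset.prod_nonneg fun n _ => by positivity
    have hkey : -(∑ n, (x n) ^ 2) / 2 + c * (∑ n, x n) ^ 2 / (2 * N)
        ≤ ∑ n, -(a/2) * (x n) ^ 2 := by
      have hS : (0:ℝ) ≤ ∑ n, (x n) ^ 2 := Finset.sum_nonneg fun n _ => sq_nonneg _
      have hsum : ∑ n, -(a/2) * (x n) ^ 2 = -(a/2) * ∑ n, (x n) ^ 2 := by
        rw [← Finset.mul_sum]
      rw [hsum]
      rcases le_or_gt c 0 with h | h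
      · have hmax : a = 1 := by simp [ha_def, max_eq_right h]
        have : c * (∑ n, x n) ^ 2 / (2 * N) ≤ 0 := by
          apply div_nonpos_of_nonpos_of_nonneg
          · exact mul_nonpos_of_nonpos_of_nonneg h (sq_nonneg _)
          · positivity
        rw [hmax]; linarith
      · have hmax : a = 1 - c := by simp [ha_def, max_eq_left h.le]
        have hCS : (∑ n, x n) ^ 2 ≤ (N : ℝ) * ∑ n, (x n) ^ 2 := by
          have := sq_sum_le_card_mul_sum_sq (s := (Finset.univ : Finset (Fin N))) (f := x)
          simpa using this
        have hN' : (0:ℝ) < (N:ℝ) := by exact_mod_cast hN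
        have : c * (∑ n, x n) ^ 2 / (2 * N) ≤ c * ((N:ℝ) * ∑ n, (x n) ^ 2) / (2 * N) := by
          apply div_le_div_of_nonneg_right ?_ (by positivity) |>.trans_eq rfl
          exact mul_le_mul_of_nonneg_left hCS h.le
        have heq : c * ((N:ℝ) * ∑ n, (x n) ^ 2) / (2 * N) = c / 2 * ∑ n, (x n) ^ 2 := by
          field_simp
        rw [hmax]
        rw [heq] at this
        nlinarith [this]
    have := Real.exp_le_exp.mpr hkey
    have hC : (0:ℝ) < (2 * π) ^ (-(N : ℝ) / 2) := by positivity
    calc (2 * π) ^ (-(N : ℝ) / 2) * ((∏ n, ((x n) ^ 2 + z ^ 2)) *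
          Real.exp (-(∑ n, (x n) ^ 2) / 2 + c * (∑ n, x n) ^ 2 / (2 * N)))
        ≤ (2 * π) ^ (-(N : ℝ) / 2) * ((∏ n, ((x n) ^ 2 + z ^ 2)) *
          Real.exp (∑ n, -(a/2) * (x n) ^ 2)) := by
          apply mul_le_mul_of_nonneg_left _ hC.le
          exact mul_le_mul_of_nonneg_left this hprodnn
      _ = _ := rfl
  have hboundint : Integrable (fun x : Fin N → ℝ =>
      (2 * π) ^ (-(N : ℝ) / 2) * ∏ n, ((x n) ^ 2 + z ^ 2) * Real.exp (-(a/2) * (x n) ^ 2)) := by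
    exact (Integrable.fintype_prod
      (f := fun (_ : Fin N) (t : ℝ) => (t ^ 2 + z ^ 2) * Real.exp (-(a/2) * t ^ 2))
      (fun _ => oneD_integrable z ha)).const_mul _
  refine hboundint.mono' (Gfun_cont z c).aestronglyMeasurable ?_
  refine Eventually.of_forall fun x => ?_
  rw [Real.norm_eq_abs, abs_of_nonneg (Gfun_nonneg z c x)]
  exact hbound x

lemma Gfun_integral_zero {N : ℕ} (z : ℝ) : ∫ x : Fin N → ℝ, Gfun N z 0 x = (1 + z ^ 2) ^ N := by
  have : ∫ x : Fin N → ℝ, Gfun N z 0 x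
      = ∫ x : Fin N → ℝ, ∏ n,
        (2 * π) ^ (-(1:ℝ) / 2) * ((x n ^ 2 + z ^ 2) * Real.exp (-(1/2 : ℝ) * (x n) ^ 2)) := by
    congr 1; funext x; exact Gfun_as_prod z x
  rw [this, volume_pi, integral_fintype_prod_eq_pow (ι := Fin N)
    (f := fun t : ℝ => (2 * π) ^ (-(1:ℝ) / 2) * ((t ^ 2 + z ^ 2) * Real.exp (-(1/2 : ℝ) * t ^ 2))),
    oneD z, Fintype.card_fin]

lemma Gfun_lt {N : ℕ} (hN : 0 < N) (z : ℝ) {c c' : ℝ} (hcc : c < c') (hc' : c' < 1) :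
    ∫ x : Fin N → ℝ, Gfun N z c x < ∫ x : Fin N → ℝ, Gfun N z c' x := by
  have hc : c < 1 := hcc.trans hc'
  have hint := Gfun_integrable hN z hc
  have hint' := Gfun_integrable hN z hc'
  have hle : ∀ x : Fin N → ℝ, Gfun N z c x ≤ Gfun N z c' x := by
    intro x
    unfold Gfun
    have hprodnn : (0:ℝ) ≤ ∏ n, ((x n) ^ 2 + z ^ 2) :=
      Finset.prod_nonneg fun n _ => by positivity
    have hC : (0:ℝ) ≤ (2 * π) ^ (-(N : ℝ) / 2) := by positivity
    refine mul_le_mul_of_nonneg_left (mul_le_mul_of_nonneg_left ?_ hprodnn) hC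
    apply Real.exp_le_exp.mpr
    have hN' : (0:ℝ) < (N:ℝ) := by exact_mod_cast hN
    have h1 : c * (∑ n, x n) ^ 2 ≤ c' * (∑ n, x n) ^ 2 :=
      mul_le_mul_of_nonneg_right hcc.le (sq_nonneg _)
    have h2 : c * (∑ n, x n) ^ 2 / (2 * N) ≤ c' * (∑ n, x n) ^ 2 / (2 * N) :=
      (div_le_div_iff_of_pos_right (by positivity)).mpr h1
    linarith
  set D : (Fin N → ℝ) → ℝ := fun x => Gfun N z c' x - Gfun N z c x with hD
  have hDnn : ∀ x, 0 ≤ D x := fun x => sub_nonneg.mpr (hle x)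
  have hDint : Integrable D := hint'.sub hint
  have hDpos : 0 < ∫ x : Fin N → ℝ, D x := by
    rw [integral_pos_iff_support_of_nonneg hDnn hDint]
    have hopen : IsOpen {x : Fin N → ℝ | 0 < D x} :=
      isOpen_lt continuous_const ((Gfun_cont z c').sub (Gfun_cont z c))
    have hx0 : (0:ℝ) < D (fun _ => 1) := by
      rw [hD]
      simp only [sub_pos]
      unfold Gfun
      have hC : (0:ℝ) < (2 * π) ^ (-(N : ℝ) / 2) := by positivity
      have hprodpos : (0:ℝ) < ∏ _n : Fin N, ((1:ℝ) ^ 2 + z ^ 2) :=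
        Finset.prod_pos fun n _ => by positivity
      refine mul_lt_mul_of_pos_left (mul_lt_mul_of_pos_left ?_ hprodpos) hC
      apply Real.exp_lt_exp.mpr
      have hN' : (0:ℝ) < (N:ℝ) := by exact_mod_cast hN
      have hsum1 : (∑ _n : Fin N, (1:ℝ)) = N := by simp
      have hsq : (∑ _n : Fin N, ((1:ℝ)) ^ 2) = N := by simp
      rw [one_pow] at hsq
      apply add_lt_add_right
      rw [hsum1]
      have h1 : c * (N:ℝ) ^ 2 < c' * (N:ℝ) ^ 2 :=
        mul_lt_mul_of_pos_right hcc (by positivity)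
      exact (div_lt_div_iff_of_pos_right (by positivity)).mpr h1
    have hsub : {x : Fin N → ℝ | 0 < D x} ⊆ Function.support D := by
      intro x hx
      exact ne_of_gt hx
    calc (0:ENNReal) < volume {x : Fin N → ℝ | 0 < D x} :=
          hopen.measure_pos volume ⟨(fun _ => 1), hx0⟩
      _ ≤ volume (Function.support D) := measure_mono hsub
  have := integral_sub hint' hint
  rw [hD] at hDpos
  rw [this] at hDpos
  linarith


/-- Comparison of `σ E_N(z;σ)` with `(1+z²)^N`: for real `z`, `σ > 0` and `N > 1`,
`σE_N < (1+z²)^N` if `σ < 1`, `=` if `σ = 1`, and `>` if `σ > 1`. -/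
theorem EN_compare_iid (z σ : ℝ) (hσ : 0 < σ) (N : ℕ) (hN : 1 < N) :
    (σ < 1 → σ * ENr N σ z < (1 + z ^ 2) ^ N) ∧
    (σ = 1 → σ * ENr N σ z = (1 + z ^ 2) ^ N) ∧
    (1 < σ → σ * ENr N σ z > (1 + z ^ 2) ^ N) := by
  have hN0 : 0 < N := by omega
  have key : σ * ENr N σ z = ∫ x : Fin N → ℝ, Gfun N z (1 - (σ ^ 2)⁻¹) x := by
    rw [ENr, ← integral_const_mul]
    exact integral_congr_ae (Filter.Eventually.of_forall fun x => key_eq hN0 hσ z x)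
  refine ⟨fun h1 => ?_, fun h1 => ?_, fun h1 => ?_⟩
  · have hc : 1 - (σ ^ 2)⁻¹ < 0 := by
      have hσ2 : σ ^ 2 < 1 := by nlinarith
      have : 1 < (σ ^ 2)⁻¹ := (one_lt_inv₀ (by positivity)).mpr hσ2
      linarith
    rw [key, ← Gfun_integral_zero (N := N) z]
    exact Gfun_lt hN0 z hc zero_lt_one
  · subst h1
    rw [key]
    norm_num
    exact Gfun_integral_zero z
  · have hc : 0 < 1 - (σ ^ 2)⁻¹ := by
      have hσ2 : 1 < σ ^ 2 := by nlinarith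
      have : (σ ^ 2)⁻¹ < 1 := (inv_lt_one₀ (by positivity)).mpr hσ2
      linarith
    have hc1 : 1 - (σ ^ 2)⁻¹ < 1 := by
      have : 0 < (σ ^ 2)⁻¹ := by positivity
      linarith
    rw [gt_iff_lt, key, ← Gfun_integral_zero (N := N) z]
    exact Gfun_lt hN0 z hc hc1
end
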